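/- arXiv:2601.08902 — 7 statements merged into one kernel-verified Lean document; each statement's English description precedes it below -/
import Mathlib

section
/- For all integers s, t ≥ 0 with n := s + t ≥ 1, there exists a family of gamma matrices for signature (s,t); that is, there exist complex N×N matrices γ_1, …, γ_n with N = 2^⌊n/2⌋ satisfying the Clifford relations γ_j γ_k + γ_k γ_j = −2 η_{jk} I and the hermiticity conditions γ_k† = γ_k for the timelike indices 1 ≤ k ≤ t and γ_k† = −γ_k for the spacelike indices t < k ≤ n. -/
open Matrix

lemma aux_gamma : ∀ m : ℕ, ∃ A : Fin (2*m+1) → Matrix (Fin (2^m)) (Fin (2^m)) ℂ,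
    (∀ i j, A i * A j + A j * A i = (if i = j then (2:ℂ) else 0) • 1) ∧
    (∀ i, (A i)ᴴ = A i) := by
  intro m
  induction m with
  | zero =>
    refine ⟨fun _ => 1, fun i j => ?_, fun i => ?_⟩
    · simp [Fin.eq_zero i, Fin.eq_zero j, two_smul]
    · simp
  | succ m ih =>
    obtain ⟨A, hAcc, hAh⟩ := ih
    have e : (Fin (2^m) ⊕ Fin (2^m)) ≃ Fin (2^(m+1)) :=
      finSumFinEquiv.trans (finCongr (by ring))
    set R := Matrix.reindexAlgEquiv ℂ ℂ e with hR
    refine ⟨Fin.snoc (Fin.snoc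
        (fun i : Fin (2*m+1) => R (fromBlocks 0 (A i) (A i) 0))
        (R (fromBlocks 0 ((-Complex.I) • 1) (Complex.I • 1) 0)))
        (R (fromBlocks 1 0 0 (-1))), fun i j => ?_, fun i => ?_⟩
    · have key : ∀ M N : Matrix (Fin (2^m) ⊕ Fin (2^m)) (Fin (2^m) ⊕ Fin (2^m)) ℂ,
          ∀ c : ℂ, M * N + N * M = c • 1 → R M * R N + R N * R M = c • 1 := by
        intro M N c h
        rw [← _root_.map_mul R, ← _root_.map_mul R, ← map_add, h, _root_.map_smul R, _root_.map_one R]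
      induction i using Fin.lastCases with
      | last =>
        induction j using Fin.lastCases with
        | last =>
          simp only [Fin.snoc_last]
          apply key
          simp [fromBlocks_multiply, fromBlocks_add, fromBlocks_smul, two_smul,
            ← fromBlocks_one]
        | cast j =>
          induction j using Fin.lastCases with
          | last =>
            simp only [Fin.snoc_last, Fin.snoc_castSucc]
            rw [if_neg (by simp [Fin.ext_iff]; omega)]
            apply key
            simp [fromBlocks_multiply, fromBlocks_add, smul_smul]
          | cast j =>
            simp only [Fin.snoc_last, Fin.snoc_castSucc]
            rw [if_neg (by simp [Fin.ext_iff]; omega)]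
            apply key
            simp [fromBlocks_multiply, fromBlocks_add]
      | cast i =>
        induction j using Fin.lastCases with
        | last =>
          induction i using Fin.lastCases with
          | last =>
            simp only [Fin.snoc_last, Fin.snoc_castSucc]
            rw [if_neg (by simp [Fin.ext_iff]; omega)]
            apply key
            simp [fromBlocks_multiply, fromBlocks_add, smul_smul]
          | cast i =>
            simp only [Fin.snoc_last, Fin.snoc_castSucc]
            rw [if_neg (by simp [Fin.ext_iff]; omega)]
            apply key
            simp [fromBlocks_multiply, fromBlocks_add]
        | cast j =>
          induction i using Fin.lastCases with
          | last =>
            induction j using Fin.lastCases with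
            | last =>
              simp only [Fin.snoc_last, Fin.snoc_castSucc]
              simp only [if_true]
              apply key
              simp [fromBlocks_multiply, fromBlocks_add, smul_smul, two_smul,
                ← fromBlocks_one, Complex.I_mul_I]
            | cast j =>
              simp only [Fin.snoc_last, Fin.snoc_castSucc]
              rw [if_neg (by simp [Fin.ext_iff]; omega)]
              apply key
              simp [fromBlocks_multiply, fromBlocks_add, smul_smul]
          | cast i =>
            induction j using Fin.lastCases with
            | last =>
              simp only [Fin.snoc_last, Fin.snoc_castSucc]
              rw [if_neg (by simp [Fin.ext_iff]; omega)]
              apply key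
              simp [fromBlocks_multiply, fromBlocks_add, smul_smul]
            | cast j =>
              simp only [Fin.snoc_castSucc]
              simp only [Fin.castSucc_inj]
              apply key
              have := hAcc i j
              simp [fromBlocks_multiply, fromBlocks_add, this, fromBlocks_smul,
                ← fromBlocks_one]
              split_ifs <;> simp
    · have keyH : ∀ M : Matrix (Fin (2^m) ⊕ Fin (2^m)) (Fin (2^m) ⊕ Fin (2^m)) ℂ,
          Mᴴ = M → (R M)ᴴ = R M := by
        intro M h
        rw [hR, reindexAlgEquiv_apply, conjTranspose_reindex, h]
      induction i using Fin.lastCases with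
      | last =>
        simp only [Fin.snoc_last]
        apply keyH
        simp [fromBlocks_conjTranspose]
      | cast i =>
        induction i using Fin.lastCases with
        | last =>
          simp only [Fin.snoc_castSucc, Fin.snoc_last]
          apply keyH
          simp [fromBlocks_conjTranspose, Complex.conj_I]
        | cast i =>
          simp only [Fin.snoc_castSucc]
          apply keyH
          simp [fromBlocks_conjTranspose, hAh]

theorem exists_gamma_family' (s t : ℕ) (hn : 1 ≤ s + t) :
    ∃ γ : Fin (s + t) → Matrix (Fin (2 ^ ((s + t) / 2))) (Fin (2 ^ ((s + t) / 2))) ℂ,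
      (∀ j k : Fin (s + t),
      γ j * γ k + γ k * γ j
        = (if j = k then (if (j : ℕ) < t then (2 : ℂ) else -2) else 0) • (1 : Matrix _ _ ℂ)) ∧
  (∀ k : Fin (s + t), (γ k)ᴴ = if (k : ℕ) < t then γ k else -(γ k)) := by
  obtain ⟨A, hAcc, hAh⟩ := aux_gamma ((s + t) / 2)
  have hle : s + t ≤ 2 * ((s + t) / 2) + 1 := by omega
  refine ⟨fun k => (if (k : ℕ) < t then (1:ℂ) else Complex.I) • A (Fin.castLE hle k),
    fun j k => ?_, fun k => ?_⟩
  · rw [smul_mul_smul_comm, smul_mul_smul_comm,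
      mul_comm (if (k : ℕ) < t then (1:ℂ) else Complex.I), ← smul_add, hAcc, smul_smul]
    congr 1
    by_cases h : j = k
    · subst h
      simp only [if_pos rfl, Fin.castLE_inj.mpr rfl]
      split_ifs <;> simp [Complex.I_mul_I] <;> ring
    · rw [if_neg h, if_neg (fun hh => h (Fin.castLE_inj.mp hh))]
      ring_nf
  · rw [conjTranspose_smul, hAh]
    by_cases h : (k : ℕ) < t
    · simp [h]
    · simp [h, Complex.conj_I, neg_smul]


/-- A family of gamma matrices for signature `(s, t)`: complex `N × N` matrices
(`N = 2 ^ ⌊(s+t)/2⌋`) indexed by `Fin (s+t)`, whose first `t` indices are timelike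
(`η = -1`) and remaining `s` indices are spacelike (`η = +1`). The conditions are the
Clifford relations `γⱼ γₖ + γₖ γⱼ = -2 ηⱼₖ I` and the hermiticity conditions
`γₖᴴ = γₖ` for timelike `k`, `γₖᴴ = -γₖ` for spacelike `k`. -/
def IsGammaFamily (s t : ℕ)
    (γ : Fin (s + t) → Matrix (Fin (2 ^ ((s + t) / 2))) (Fin (2 ^ ((s + t) / 2))) ℂ) : Prop :=
  (∀ j k : Fin (s + t),
      γ j * γ k + γ k * γ j
        = (if j = k then (if (j : ℕ) < t then (2 : ℂ) else -2) else 0) • (1 : Matrix _ _ ℂ)) ∧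
  (∀ k : Fin (s + t), (γ k)ᴴ = if (k : ℕ) < t then γ k else -(γ k))

/-- for all `s, t ≥ 0` with `s + t ≥ 1`, a family of gamma matrices for
signature `(s, t)` exists. -/
theorem exists_gamma_family (s t : ℕ) (hn : 1 ≤ s + t) :
    ∃ γ : Fin (s + t) → Matrix (Fin (2 ^ ((s + t) / 2))) (Fin (2 ^ ((s + t) / 2))) ℂ,
      IsGammaFamily s t γ := by
  obtain ⟨γ, h1, h2⟩ := exists_gamma_family' s t hn
  exact ⟨γ, h1, h2⟩
end

section
/- Let γ_1, …, γ_n be a family of gamma matrices for signature (s,t) and let ⟨·,·⟩ be the spin-invariant inner product. Then for every matrix b in the real linear span of the products {γ_i γ_j : i ≠ j} (the spin Lie algebra) and all ψ1, ψ2 ∈ ℂ^N: (i) ⟨b ψ1, ψ2⟩ + ⟨ψ1, b ψ2⟩ = 0; (ii) ⟨exp(b) ψ1, exp(b) ψ2⟩ = ⟨ψ1, ψ2⟩, where exp is the matrix exponential. -/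
open Matrix

/-- The spin-invariant inner product. -/
noncomputable def spinInner (s t : ℕ)
    (γ : Fin (s + t) → Matrix (Fin (2 ^ ((s + t) / 2))) (Fin (2 ^ ((s + t) / 2))) ℂ)
    (ψ₁ ψ₂ : Fin (2 ^ ((s + t) / 2)) → ℂ) : ℂ :=
  if t = 0 then star ψ₁ ⬝ᵥ ψ₂
  else Complex.I ^ (t / 2) *
    (star ψ₁ ⬝ᵥ (List.ofFn fun i : Fin t => γ (Fin.castLE (Nat.le_add_left t s) i)).prod *ᵥ ψ₂)

/-!
Write `Γ = γ₁ ⋯ γₜ`, so that `⟨ψ₁, ψ₂⟩ = i^⌊t/2⌋ ψ₁ᴴ Γ ψ₂`. Claim (i) then says `bᴴ Γ = -Γ b`,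
and claim (ii) says `(exp b)ᴴ Γ exp b = Γ`.

Each `γₖ` passes through `Γ` at the cost of the sign `(-1)^(t+1) εₖ`, where `εₖ = ±1` is also
the sign in `γₖᴴ = εₖ γₖ`. In `(γᵢ γⱼ)ᴴ Γ = εᵢ εⱼ γⱼ γᵢ Γ` these signs cancel in pairs, and the
anticommutation `γⱼ γᵢ = -γᵢ γⱼ` gives (i) on generators, hence on their real span. As `Γ` is
invertible, (i) reads `bᴴ = Γ (-b) Γ⁻¹`, so `(exp b)ᴴ = exp bᴴ = Γ (exp b)⁻¹ Γ⁻¹`, which is (ii).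
-/

theorem List.mul_prod_map_eq_smul {ι K R : Type*} [CommSemiring K] [Semiring R] [Algebra K R]
    {x : R} {f : ι → R} {c : ι → K} (l : List ι) (h : ∀ i ∈ l, x * f i = c i • (f i * x)) :
    x * (l.map f).prod = (l.map c).prod • ((l.map f).prod * x) := by
  induction l with
  | nil => simp
  | cons a l ih =>
    rw [List.forall_mem_cons] at h
    simp only [List.map_cons, List.prod_cons]
    rw [← mul_assoc, h.1, smul_mul_assoc, mul_assoc, ih h.2, mul_smul_comm, smul_smul,
      mul_assoc]

namespace Matrix

variable {n 𝕜 : Type*} [Fintype n]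

theorem star_mulVec_dotProduct_mulVec [CommSemiring 𝕜] [StarRing 𝕜] (A B : Matrix n n 𝕜)
    (ψ₁ ψ₂ : n → 𝕜) : star (B *ᵥ ψ₁) ⬝ᵥ A *ᵥ ψ₂ = star ψ₁ ⬝ᵥ (Bᴴ * A) *ᵥ ψ₂ := by
  rw [star_mulVec, dotProduct_mulVec, vecMul_vecMul, ← dotProduct_mulVec]

theorem conjTranspose_exp_mul_mul_exp [DecidableEq n] [RCLike 𝕜] {A b : Matrix n n 𝕜}
    (hA : IsUnit A) (hb : bᴴ * A = -(A * b)) :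
    (NormedSpace.exp b)ᴴ * A * NormedSpace.exp b = A := by
  have hAdet : IsUnit A.det := (isUnit_iff_isUnit_det A).mp hA
  have hconj : bᴴ = A * -b * A⁻¹ := by
    rw [mul_neg, ← hb, mul_nonsing_inv_cancel_right _ _ hAdet]
  have hexp : IsUnit (NormedSpace.exp b).det := (isUnit_iff_isUnit_det _).mp (isUnit_exp b)
  rw [← exp_conjTranspose, hconj, exp_conj _ _ hA, exp_neg,
    nonsing_inv_mul_cancel_right _ _ hAdet, nonsing_inv_mul_cancel_right _ _ hexp]

end Matrix

def gammaSign (t k : ℕ) : ℂ := if k < t then 1 else -1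

theorem prod_ite_val_eq_gammaSign (t k : ℕ) :
    ∏ i : Fin t, (if (i : ℕ) = k then (1 : ℂ) else -1) = (-1) ^ (t + 1) * gammaSign t k := by
  induction t with
  | zero => simp [gammaSign]
  | succ t ih =>
    rw [Fin.prod_univ_castSucc]
    simp only [Fin.val_castSucc, Fin.val_last, ih]
    unfold gammaSign
    split_ifs <;> first | omega | ring

theorem gammaSign_mul_self (t k : ℕ) : gammaSign t k * gammaSign t k = 1 := by
  unfold gammaSign; split_ifs <;> norm_num

noncomputable def timelikeGammaProd (s t : ℕ)
    (γ : Fin (s + t) → Matrix (Fin (2 ^ ((s + t) / 2))) (Fin (2 ^ ((s + t) / 2))) ℂ) :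
    Matrix (Fin (2 ^ ((s + t) / 2))) (Fin (2 ^ ((s + t) / 2))) ℂ :=
  (List.ofFn fun i : Fin t => γ (Fin.castLE (Nat.le_add_left t s) i)).prod

theorem spinInner_eq_mul_dotProduct (s t : ℕ)
    (γ : Fin (s + t) → Matrix (Fin (2 ^ ((s + t) / 2))) (Fin (2 ^ ((s + t) / 2))) ℂ)
    (ψ₁ ψ₂ : Fin (2 ^ ((s + t) / 2)) → ℂ) :
    spinInner s t γ ψ₁ ψ₂ = Complex.I ^ (t / 2) * (star ψ₁ ⬝ᵥ timelikeGammaProd s t γ *ᵥ ψ₂) := by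
  unfold spinInner timelikeGammaProd
  split_ifs with ht
  · subst ht; simp
  · rfl

namespace IsGammaFamily

variable {s t : ℕ} {γ : Fin (s + t) → Matrix (Fin (2 ^ ((s + t) / 2))) (Fin (2 ^ ((s + t) / 2))) ℂ}
  (hγ : IsGammaFamily s t γ)
include hγ

theorem mul_self (k : Fin (s + t)) : γ k * γ k = gammaSign t k • 1 := by
  have h := hγ.1 k k
  rw [if_pos rfl, ← two_smul ℂ (γ k * γ k)] at h
  apply smul_right_injective _ (two_ne_zero (α := ℂ))
  dsimp only
  rw [h, smul_smul]; unfold gammaSign; split_ifs <;> norm_num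

theorem conjTranspose_eq (k : Fin (s + t)) : (γ k)ᴴ = gammaSign t k • γ k := by
  rw [hγ.2 k]; unfold gammaSign; split_ifs <;> simp

theorem anticomm {j k : Fin (s + t)} (h : j ≠ k) : γ j * γ k = -(γ k * γ j) := by
  have hjk := hγ.1 j k
  rw [if_neg h, zero_smul] at hjk
  exact eq_neg_of_add_eq_zero_left hjk

theorem mul_eq_smul_mul (k i : Fin (s + t)) :
    γ k * γ i = (if i = k then 1 else -1 : ℂ) • (γ i * γ k) := by
  split_ifs with h
  · rw [h, one_smul]
  · rw [hγ.anticomm (Ne.symm h), neg_one_smul]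

theorem isUnit (k : Fin (s + t)) : IsUnit (γ k) :=
  IsUnit.of_mul_eq_one (gammaSign t k • γ k) <| by
    rw [mul_smul_comm, hγ.mul_self, smul_smul, gammaSign_mul_self, one_smul]

theorem isUnit_timelikeGammaProd : IsUnit (timelikeGammaProd s t γ) :=
  List.prod_isUnit fun _ hM => by
    obtain ⟨i, rfl⟩ := List.mem_ofFn.mp hM
    exact hγ.isUnit _

theorem mul_timelikeGammaProd (k : Fin (s + t)) :
    γ k * timelikeGammaProd s t γ
      = ((-1) ^ (t + 1) * gammaSign t k) • (timelikeGammaProd s t γ * γ k) := by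
  have hprod : timelikeGammaProd s t γ
      = ((List.ofFn (Fin.castLE (Nat.le_add_left t s))).map γ).prod := by
    rw [List.map_ofFn]; rfl
  rw [hprod, List.mul_prod_map_eq_smul _ fun i _ => hγ.mul_eq_smul_mul k i, List.map_ofFn,
    List.prod_ofFn]
  congr 1
  simp only [Function.comp_def, Fin.ext_iff, Fin.val_castLE]
  exact prod_ite_val_eq_gammaSign t k

theorem conjTranspose_mul_timelikeGammaProd {i j : Fin (s + t)} (hij : i ≠ j) :
    (γ i * γ j)ᴴ * timelikeGammaProd s t γ = -(timelikeGammaProd s t γ * (γ i * γ j)) := by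
  calc (γ i * γ j)ᴴ * timelikeGammaProd s t γ
      = (gammaSign t j * gammaSign t i) • (γ j * (γ i * timelikeGammaProd s t γ)) := by
        rw [conjTranspose_mul, hγ.conjTranspose_eq, hγ.conjTranspose_eq, smul_mul_smul_comm,
          smul_mul_assoc, mul_assoc]
    _ = ((gammaSign t i * gammaSign t i) * (gammaSign t j * gammaSign t j)) •
          (timelikeGammaProd s t γ * (γ j * γ i)) := by
        rw [hγ.mul_timelikeGammaProd, mul_smul_comm, ← mul_assoc, hγ.mul_timelikeGammaProd,
          smul_mul_assoc, smul_smul, smul_smul, mul_assoc, mul_assoc (timelikeGammaProd s t γ)]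
        congr 1
        have h : ((-1 : ℂ) ^ (t + 1)) ^ 2 = 1 := by rw [← pow_mul, pow_mul']; norm_num
        linear_combination (gammaSign t i ^ 2 * gammaSign t j ^ 2) * h
    _ = -(timelikeGammaProd s t γ * (γ i * γ j)) := by
        rw [gammaSign_mul_self, gammaSign_mul_self, one_mul, one_smul, hγ.anticomm hij.symm,
          mul_neg]

theorem conjTranspose_mul_timelikeGammaProd_of_mem_span
    {b : Matrix (Fin (2 ^ ((s + t) / 2))) (Fin (2 ^ ((s + t) / 2))) ℂ}
    (hb : b ∈ Submodule.span ℝ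
      {M : Matrix (Fin (2 ^ ((s + t) / 2))) (Fin (2 ^ ((s + t) / 2))) ℂ |
        ∃ i j : Fin (s + t), i ≠ j ∧ M = γ i * γ j}) :
    bᴴ * timelikeGammaProd s t γ = -(timelikeGammaProd s t γ * b) := by
  induction hb using Submodule.span_induction with
  | mem M hM =>
    obtain ⟨i, j, hij, rfl⟩ := hM
    exact hγ.conjTranspose_mul_timelikeGammaProd hij
  | zero => simp
  | add x y _ _ hx hy => rw [conjTranspose_add, add_mul, hx, hy, mul_add, neg_add]
  | smul r x _ hx =>
    rw [conjTranspose_smul, star_trivial, smul_mul_assoc, hx, mul_smul_comm, smul_neg]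

end IsGammaFamily

theorem spin_algebra_antiselfadjoint_and_exp_invariance_general (s t : ℕ)
    (γ : Fin (s + t) → Matrix (Fin (2 ^ ((s + t) / 2))) (Fin (2 ^ ((s + t) / 2))) ℂ)
    (hγ : IsGammaFamily s t γ)
    (b : Matrix (Fin (2 ^ ((s + t) / 2))) (Fin (2 ^ ((s + t) / 2))) ℂ)
    (hb : b ∈ Submodule.span ℝ
      {M : Matrix (Fin (2 ^ ((s + t) / 2))) (Fin (2 ^ ((s + t) / 2))) ℂ |
        ∃ i j : Fin (s + t), i ≠ j ∧ M = γ i * γ j}) :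
    (∀ ψ₁ ψ₂ : Fin (2 ^ ((s + t) / 2)) → ℂ,
      spinInner s t γ (b *ᵥ ψ₁) ψ₂ + spinInner s t γ ψ₁ (b *ᵥ ψ₂) = 0) ∧
    (∀ ψ₁ ψ₂ : Fin (2 ^ ((s + t) / 2)) → ℂ,
      spinInner s t γ ((NormedSpace.exp b) *ᵥ ψ₁) ((NormedSpace.exp b) *ᵥ ψ₂)
        = spinInner s t γ ψ₁ ψ₂) := by
  have hskew := hγ.conjTranspose_mul_timelikeGammaProd_of_mem_span hb
  refine ⟨fun ψ₁ ψ₂ => ?_, fun ψ₁ ψ₂ => ?_⟩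
  · rw [spinInner_eq_mul_dotProduct, spinInner_eq_mul_dotProduct, star_mulVec_dotProduct_mulVec,
      mulVec_mulVec, ← mul_add, ← dotProduct_add, ← add_mulVec, hskew, neg_add_cancel,
      zero_mulVec, dotProduct_zero, mul_zero]
  · rw [spinInner_eq_mul_dotProduct, spinInner_eq_mul_dotProduct, star_mulVec_dotProduct_mulVec,
      mulVec_mulVec, conjTranspose_exp_mul_mul_exp hγ.isUnit_timelikeGammaProd hskew]

/-- for every `b` in the real linear span of the products `γᵢ γⱼ` (`i ≠ j`),
i.e. the spin Lie algebra, Clifford multiplication by `b` is anti-self-adjoint for the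
spin-invariant inner product, and the matrix exponential `exp b` preserves that product. -/
theorem spin_algebra_antiselfadjoint_and_exp_invariance (s t : ℕ) (hn : 1 ≤ s + t)
    (γ : Fin (s + t) → Matrix (Fin (2 ^ ((s + t) / 2))) (Fin (2 ^ ((s + t) / 2))) ℂ)
    (hγ : IsGammaFamily s t γ)
    (b : Matrix (Fin (2 ^ ((s + t) / 2))) (Fin (2 ^ ((s + t) / 2))) ℂ)
    (hb : b ∈ Submodule.span ℝ
      {M : Matrix (Fin (2 ^ ((s + t) / 2))) (Fin (2 ^ ((s + t) / 2))) ℂ |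
        ∃ i j : Fin (s + t), i ≠ j ∧ M = γ i * γ j}) :
    (∀ ψ₁ ψ₂ : Fin (2 ^ ((s + t) / 2)) → ℂ,
      spinInner s t γ (b *ᵥ ψ₁) ψ₂ + spinInner s t γ ψ₁ (b *ᵥ ψ₂) = 0) ∧
    (∀ ψ₁ ψ₂ : Fin (2 ^ ((s + t) / 2)) → ℂ,
      spinInner s t γ ((NormedSpace.exp b) *ᵥ ψ₁) ((NormedSpace.exp b) *ᵥ ψ₂)
        = spinInner s t γ ψ₁ ψ₂) :=
  spin_algebra_antiselfadjoint_and_exp_invariance_general s t γ hγ b hb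
end

section
/- Let s ≥ 1 and t ≥ 1, let γ_1, …, γ_n be a family of gamma matrices for signature (s,t), and set H := i^⌊t/2⌋ γ_1 ⋯ γ_t, so that the spin-invariant inner product is ⟨ψ1, ψ2⟩ = ψ1† H ψ2. Then H is Hermitian, H² = I, and tr H = 0; consequently H has eigenvalues +1 and −1, each with multiplicity 2^{⌊n/2⌋−1}, i.e. the Hermitian form ⟨·,·⟩ has indefinite signature (2^{⌊n/2⌋−1}, 2^{⌊n/2⌋−1}). -/
open Matrix

/-- The matrix `H := i ^ ⌊t/2⌋ γ₁ ⋯ γ_t` representing the spin-invariant inner product,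
`⟨ψ₁, ψ₂⟩ = ψ₁† H ψ₂`. -/
noncomputable def innerMatrix (s t : ℕ)
    (γ : Fin (s + t) → Matrix (Fin (2 ^ ((s + t) / 2))) (Fin (2 ^ ((s + t) / 2))) ℂ) :
    Matrix (Fin (2 ^ ((s + t) / 2))) (Fin (2 ^ ((s + t) / 2))) ℂ :=
  (Complex.I ^ (t / 2)) •
    (List.ofFn fun i : Fin t => γ (Fin.castLE (Nat.le_add_left t s) i)).prod

section Aux

variable {R : Type*} [Ring R]

/-- If `x` anticommutes with every member of `L`, then moving `x` across the product
picks up a sign `(-1) ^ L.length`. -/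
lemma aux_prod_mul_anticomm (x : R) : ∀ (L : List R), (∀ b ∈ L, x * b = -(b * x)) →
    L.prod * x = (-1) ^ L.length * (x * L.prod)
  | [], _ => by simp
  | a :: L, h => by
    have ha : x * a = -(a * x) := h a (by simp)
    have ha' : a * x = -(x * a) := by rw [ha, neg_neg]
    have ih := aux_prod_mul_anticomm x L (fun b hb => h b (by simp [hb]))
    simp only [List.prod_cons, List.length_cons, pow_succ]
    calc a * L.prod * x = a * (L.prod * x) := by rw [mul_assoc]
      _ = a * ((-1) ^ L.length * (x * L.prod)) := by rw [ih]
      _ = (-1) ^ L.length * (a * (x * L.prod)) := by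
          rw [← mul_assoc, ← ((Commute.neg_one_left a).pow_left _).eq, mul_assoc]
      _ = (-1) ^ L.length * (-(x * (a * L.prod))) := by
          rw [← mul_assoc a x, ha', neg_mul, mul_assoc]
      _ = (-1) ^ L.length * -1 * (x * (a * L.prod)) := by
          rw [mul_neg, mul_assoc, neg_one_mul, mul_neg]

/-- Reversing a product of pairwise anticommuting elements gives the sign
`(-1) ^ (length choose 2)`. -/
lemma aux_reverse_prod : ∀ (L : List R), L.Pairwise (fun a b => a * b = -(b * a)) →
    L.reverse.prod = (-1) ^ (L.length.choose 2) * L.prod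
  | [], _ => by simp
  | a :: L, h => by
    rw [List.pairwise_cons] at h
    have ih := aux_reverse_prod L h.2
    have h1 := aux_prod_mul_anticomm a L h.1
    rw [List.reverse_cons, List.prod_append, List.prod_singleton, ih, List.prod_cons,
      mul_assoc, h1, ← mul_assoc, ← pow_add, List.length_cons]
    have : L.length.choose 2 + L.length = (L.length + 1).choose 2 := by
      rw [Nat.choose_succ_succ, Nat.choose_one_right, Nat.add_comm]
    rw [this]

/-- If every member of `L` squares to `1`, then `L.prod * L.reverse.prod = 1`. -/
lemma aux_prod_mul_reverse : ∀ (L : List R), (∀ b ∈ L, b * b = 1) →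
    L.prod * L.reverse.prod = 1
  | [], _ => by simp
  | a :: L, h => by
    rw [List.reverse_cons, List.prod_cons, List.prod_append, List.prod_singleton,
      mul_assoc, ← mul_assoc L.prod, aux_prod_mul_reverse L (fun b hb => h b (by simp [hb])),
      one_mul, h a (by simp)]

lemma aux_neg_one_pow_choose_two : ∀ n : ℕ, ((-1 : ℂ)) ^ (n.choose 2) = (-1) ^ (n / 2) := by
  intro n
  induction n using Nat.twoStepInduction with
  | zero => simp
  | one => simp
  | more n ih _ =>
    have h1 : (n + 2).choose 2 = n.choose 2 + (2 * n + 1) := by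
      rw [show (n + 2) = (n + 1) + 1 from rfl, show (2 : ℕ) = 1 + 1 from rfl,
        Nat.choose_succ_succ' (n + 1) 1, Nat.choose_succ_succ' n 1]
      simp only [Nat.choose_one_right]
      generalize n.choose (1 + 1) = m
      omega
    have h2 : (n + 2) / 2 = n / 2 + 1 := by omega
    rw [h1, h2, pow_add, pow_add, ih, pow_mul]
    norm_num [pow_succ]

/-- If `x` anticommutes with the head of the list and commutes with the rest,
then `x` anticommutes with the product. -/
lemma aux_prod_anticomm_head : ∀ {t : ℕ} (g : Fin t → R) (x : R) (ht : 0 < t),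
    x * g ⟨0, ht⟩ = -(g ⟨0, ht⟩ * x) →
    (∀ i : Fin t, (i : ℕ) ≠ 0 → x * g i = g i * x) →
    (List.ofFn g).prod * x = -(x * (List.ofFn g).prod)
  | 0, _, _, ht, _, _ => absurd ht (by omega)
  | t + 1, g, x, ht, h0, hi => by
    rw [List.ofFn_succ, List.prod_cons]
    have hc : (List.ofFn fun i : Fin t => g i.succ).prod * x
        = x * (List.ofFn fun i : Fin t => g i.succ).prod := by
      refine ((Commute.list_prod_right _ x fun y hy => ?_)).symm.eq
      rw [List.mem_ofFn] at hy
      obtain ⟨i, rfl⟩ := hy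
      exact hi i.succ (by simp)
    have h0' : g (0 : Fin (t + 1)) * x = -(x * g (0 : Fin (t + 1))) := by
      have : (⟨0, ht⟩ : Fin (t + 1)) = 0 := rfl
      rw [this] at h0
      rw [h0, neg_neg]
    calc g 0 * (List.ofFn fun i : Fin t => g i.succ).prod * x
        = g 0 * ((List.ofFn fun i : Fin t => g i.succ).prod * x) := by rw [mul_assoc]
      _ = g 0 * (x * (List.ofFn fun i : Fin t => g i.succ).prod) := by rw [hc]
      _ = (g 0 * x) * (List.ofFn fun i : Fin t => g i.succ).prod := by rw [mul_assoc]
      _ = -(x * (g 0 * (List.ofFn fun i : Fin t => g i.succ).prod)) := by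
          rw [h0', neg_mul, mul_assoc]

end Aux

/-- for `s ≥ 1` and `t ≥ 1`, the matrix `H` representing the spin-invariant
inner product is Hermitian, squares to the identity and is traceless; consequently its
eigenvalues are `+1` and `-1`, each with multiplicity `2 ^ (⌊n/2⌋ - 1)`, i.e. the Hermitian
form has indefinite signature `(2 ^ (⌊n/2⌋ - 1), 2 ^ (⌊n/2⌋ - 1))`. -/
theorem innerMatrix_hermitian_involutive_traceless_signature (s t : ℕ)
    (hs : 1 ≤ s) (ht : 1 ≤ t)
    (γ : Fin (s + t) → Matrix (Fin (2 ^ ((s + t) / 2))) (Fin (2 ^ ((s + t) / 2))) ℂ)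
    (hγ : IsGammaFamily s t γ) :
    (innerMatrix s t γ)ᴴ = innerMatrix s t γ ∧
    innerMatrix s t γ * innerMatrix s t γ = 1 ∧
    (innerMatrix s t γ).trace = 0 ∧
    Module.finrank ℂ
        (Module.End.eigenspace (Matrix.toLin' (innerMatrix s t γ)) 1)
      = 2 ^ ((s + t) / 2 - 1) ∧
    Module.finrank ℂ
        (Module.End.eigenspace (Matrix.toLin' (innerMatrix s t γ)) (-1))
      = 2 ^ ((s + t) / 2 - 1) := by
  obtain ⟨hcl, hherm⟩ := hγ
  set g : Fin t → Matrix (Fin (2 ^ ((s + t) / 2))) (Fin (2 ^ ((s + t) / 2))) ℂ :=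
    fun i => γ (Fin.castLE (Nat.le_add_left t s) i) with hg
  set L : List (Matrix (Fin (2 ^ ((s + t) / 2))) (Fin (2 ^ ((s + t) / 2))) ℂ) :=
    List.ofFn g with hLdef
  set P := L.prod with hPdef
  -- basic Clifford relations among the timelike gammas
  have hinj : Function.Injective (Fin.castLE (Nat.le_add_left t s)) := Fin.castLE_injective _
  have hne : ∀ i j : Fin t, i ≠ j → g i * g j = -(g j * g i) := by
    intro i j hij
    have h := hcl (Fin.castLE (Nat.le_add_left t s) i) (Fin.castLE (Nat.le_add_left t s) j)
    rw [if_neg (fun hc => hij (hinj hc)), zero_smul] at h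
    exact eq_neg_of_add_eq_zero_left h
  have hsq : ∀ i : Fin t, g i * g i = 1 := by
    intro i
    have h := hcl (Fin.castLE (Nat.le_add_left t s) i) (Fin.castLE (Nat.le_add_left t s) i)
    rw [if_pos rfl, if_pos (by simpa using i.isLt)] at h
    have h2 : (2 : ℂ) • (g i * g i) = (2 : ℂ) • (1 : Matrix _ _ ℂ) := by
      rw [two_smul]; exact h
    exact smul_right_injective _ two_ne_zero h2
  have hherm' : ∀ i : Fin t, (g i)ᴴ = g i := by
    intro i
    have h := hherm (Fin.castLE (Nat.le_add_left t s) i)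
    rwa [if_pos (by simpa using i.isLt)] at h
  -- the reverse product and conjugate transpose of P
  have hpair : L.Pairwise (fun a b => a * b = -(b * a)) := by
    rw [hLdef, List.pairwise_ofFn]
    exact fun i j hij => hne i j (ne_of_lt hij)
  have hLlen : L.length = t := by rw [hLdef, List.length_ofFn]
  have hPrev : L.reverse.prod = (-1 : Matrix _ _ ℂ) ^ (t.choose 2) * P := by
    have h := aux_reverse_prod L hpair
    rwa [hLlen] at h
  set e : ℂ := (-1) ^ (t / 2) with hedef
  have he2 : e * e = 1 := by
    rw [hedef, ← pow_add]
    exact Even.neg_one_pow ⟨t / 2, rfl⟩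
  have hrev' : L.reverse.prod = e • P := by
    rw [hPrev]
    have hm1 : (-1 : Matrix (Fin (2 ^ ((s + t) / 2))) (Fin (2 ^ ((s + t) / 2))) ℂ)
        = (-1 : ℂ) • 1 := by simp
    rw [hm1, smul_pow, one_pow, smul_mul_assoc, one_mul, aux_neg_one_pow_choose_two]
  have hPconj : Pᴴ = L.reverse.prod := by
    rw [hPdef, Matrix.conjTranspose_list_prod]
    congr 1
    rw [hLdef, List.map_ofFn]
    have hcomp : conjTranspose ∘ g = g := funext hherm'
    rw [hcomp]
  have hPH : Pᴴ = e • P := hPconj.trans hrev'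
  have hPP : P * L.reverse.prod = 1 :=
    aux_prod_mul_reverse L (by rw [hLdef, List.forall_mem_ofFn_iff]; exact hsq)
  have hPe : P * (e • P) = 1 := by rw [← hrev']; exact hPP
  have hP2 : P * P = e • 1 := by
    calc P * P = (e * e) • (P * P) := by rw [he2, one_smul]
      _ = e • (e • (P * P)) := by rw [mul_smul]
      _ = e • (P * (e • P)) := by rw [mul_smul_comm]
      _ = e • 1 := by rw [hPe]
  set c : ℂ := Complex.I ^ (t / 2) with hcdef
  have hHdef : innerMatrix s t γ = c • P := rfl
  have hc2 : c * c = e := by rw [hcdef, hedef, ← mul_pow, Complex.I_mul_I]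
  have hcs : star c = e * c := by
    rw [hcdef, star_pow, show star Complex.I = -Complex.I from by
      simp [Complex.star_def, Complex.conj_I], hedef,
      show (-Complex.I) = (-1) * Complex.I from (neg_one_mul _).symm, mul_pow]
  -- Part 1: Hermitian
  have part1 : (innerMatrix s t γ)ᴴ = innerMatrix s t γ := by
    rw [hHdef, Matrix.conjTranspose_smul, hPH, smul_smul]
    congr 1
    calc star c * e = e * c * e := by rw [hcs]
      _ = c * (e * e) := by ring
      _ = c := by rw [he2, mul_one]
  -- Part 2: involutive
  have part2 : innerMatrix s t γ * innerMatrix s t γ = 1 := by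
    rw [hHdef, smul_mul_smul_comm, hc2, hP2, smul_smul, he2, one_smul]
  -- Part 3: traceless
  have hst1 : t ≤ s + t - 1 := by omega
  have hlast : s + t - 1 < s + t := by omega
  set b : Matrix (Fin (2 ^ ((s + t) / 2))) (Fin (2 ^ ((s + t) / 2))) ℂ :=
    γ ⟨s + t - 1, hlast⟩ with hbdef
  have hb2 : b * b = -1 := by
    have h := hcl ⟨s + t - 1, hlast⟩ ⟨s + t - 1, hlast⟩
    rw [if_pos rfl, if_neg (by simp; omega)] at h
    have h' : b * b + b * b = (-2 : ℂ) • (1 : Matrix _ _ ℂ) := h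
    have h2 : (2 : ℂ) • (b * b) = (2 : ℂ) • (-1 : Matrix _ _ ℂ) := by
      rw [two_smul, two_smul, h', neg_smul, two_smul, neg_add]
    exact smul_right_injective _ two_ne_zero h2
  have ht0 : (0 : ℕ) < t := ht
  set a : Matrix (Fin (2 ^ ((s + t) / 2))) (Fin (2 ^ ((s + t) / 2))) ℂ := g ⟨0, ht0⟩ with hadef
  have ha2 : a * a = 1 := hsq _
  have hab : a * b = -(b * a) := by
    have h := hcl (Fin.castLE (Nat.le_add_left t s) ⟨0, ht0⟩) ⟨s + t - 1, hlast⟩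
    rw [if_neg (by
      intro hc
      have := congrArg Fin.val hc
      simp at this
      omega), zero_smul] at h
    exact eq_neg_of_add_eq_zero_left h
  have hgb : ∀ i : Fin t, g i * b = -(b * g i) := by
    intro i
    have h := hcl (Fin.castLE (Nat.le_add_left t s) i) ⟨s + t - 1, hlast⟩
    rw [if_neg (by
      intro hc
      have := congrArg Fin.val hc
      simp at this
      omega), zero_smul] at h
    exact eq_neg_of_add_eq_zero_left h
  obtain ⟨x, hxdef⟩ : ∃ x, x = a * b := ⟨a * b, rfl⟩
  have hxx : x * x = 1 := by
    rw [hxdef]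
    calc a * b * (a * b) = a * (b * a) * b := by rw [mul_assoc, mul_assoc, mul_assoc]
      _ = a * (-(a * b)) * b := by
          have : b * a = -(a * b) := by rw [hab, neg_neg]
          rw [this]
      _ = -(a * a * (b * b)) := by
          rw [mul_neg, neg_mul, mul_assoc, mul_assoc, mul_assoc]
      _ = 1 := by rw [ha2, hb2, one_mul, neg_neg]
  have hx0 : x * g ⟨0, ht0⟩ = -(g ⟨0, ht0⟩ * x) := by
    rw [hxdef, ← hadef]
    calc a * b * a = a * (b * a) := by rw [mul_assoc]
      _ = a * (-(a * b)) := by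
          have : b * a = -(a * b) := by rw [hab, neg_neg]
          rw [this]
      _ = -(a * (a * b)) := by rw [mul_neg]
  have hxi : ∀ i : Fin t, (i : ℕ) ≠ 0 → x * g i = g i * x := by
    intro i hi0
    rw [hxdef]
    have hia : g i * a = -(a * g i) := by
      apply hne
      intro hc
      exact hi0 (by rw [hc])
    have hai : a * g i = -(g i * a) := by rw [hia, neg_neg]
    have hbi : b * g i = -(g i * b) := by rw [hgb i, neg_neg]
    calc a * b * g i = a * (b * g i) := by rw [mul_assoc]
      _ = a * (-(g i * b)) := by rw [hbi]
      _ = -(a * (g i * b)) := by rw [mul_neg]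
      _ = -((a * g i) * b) := by rw [mul_assoc]
      _ = -((-(g i * a)) * b) := by rw [hai]
      _ = g i * a * b := by rw [neg_mul, neg_neg]
      _ = g i * (a * b) := by rw [mul_assoc]
  have hPx : P * x = -(x * P) := by
    rw [hPdef, hLdef]
    exact aux_prod_anticomm_head g x ht0 hx0 hxi
  have hPtr : P.trace = 0 := by
    have h1 : (P * x * x).trace = P.trace := by rw [mul_assoc, hxx, mul_one]
    have h2 : (P * x * x).trace = -P.trace := by
      rw [Matrix.trace_mul_comm, hPx, mul_neg, Matrix.trace_neg, ← mul_assoc, hxx, one_mul]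
    have h3 : P.trace = -P.trace := h1.symm.trans h2
    linear_combination h3 / 2
  have part3 : (innerMatrix s t γ).trace = 0 := by
    rw [hHdef, Matrix.trace_smul, hPtr, smul_zero]
  -- Parts 4 and 5: eigenspace dimensions
  set f := Matrix.toLin' (innerMatrix s t γ) with hfdef
  have hf2 : f ∘ₗ f = LinearMap.id := by
    rw [hfdef, ← Matrix.toLin'_mul, part2, Matrix.toLin'_one]
  have hff : ∀ v, f (f v) = v := fun v => congrFun (congrArg DFunLike.coe hf2) v
  have hftr : LinearMap.trace ℂ _ f = 0 := by
    rw [LinearMap.trace_eq_matrix_trace ℂ (Pi.basisFun ℂ _), LinearMap.toMatrix_eq_toMatrix',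
      hfdef, LinearMap.toMatrix'_toLin']
    exact part3
  have hdim : ∀ μ : ℂ, μ * μ = 1 →
      Module.finrank ℂ (Module.End.eigenspace f μ) = 2 ^ ((s + t) / 2 - 1) := by
    intro μ hμ
    set p : (Fin (2 ^ ((s + t) / 2)) → ℂ) →ₗ[ℂ] (Fin (2 ^ ((s + t) / 2)) → ℂ) :=
      (2⁻¹ : ℂ) • (LinearMap.id + μ • f) with hpdef
    have hproj : LinearMap.IsProj (Module.End.eigenspace f μ) p := by
      constructor
      · intro v
        rw [Module.End.mem_eigenspace_iff]
        simp only [hpdef, LinearMap.smul_apply, LinearMap.add_apply, LinearMap.id_apply,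
          _root_.map_smul, map_add, hff]
        match_scalars <;>
          first
            | ring1
            | linear_combination (2⁻¹ : ℂ) * hμ
            | linear_combination (-(2⁻¹ : ℂ)) * hμ
            | linear_combination hμ
            | linear_combination (2⁻¹ : ℂ) * μ * hμ
      · intro v hv
        rw [Module.End.mem_eigenspace_iff] at hv
        simp only [hpdef, LinearMap.smul_apply, LinearMap.add_apply, LinearMap.id_apply, hv]
        match_scalars <;>
          first
            | ring1
            | linear_combination (2⁻¹ : ℂ) * hμ
            | linear_combination (-(2⁻¹ : ℂ)) * hμ
            | linear_combination hμ
            | linear_combination (2⁻¹ : ℂ) * μ * hμ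
    have htrp : LinearMap.trace ℂ _ p = (Module.finrank ℂ (Module.End.eigenspace f μ) : ℂ) :=
      hproj.trace
    have htrp2 : LinearMap.trace ℂ _ p = (2 ^ ((s + t) / 2 - 1) : ℕ) := by
      rw [hpdef, _root_.map_smul, map_add, LinearMap.trace_id, _root_.map_smul, hftr, smul_zero,
        add_zero,
        Module.finrank_fintype_fun_eq_card, Fintype.card_fin]
      have hk : (s + t) / 2 = ((s + t) / 2 - 1) + 1 := by omega
      rw [hk]
      push_cast
      rw [pow_succ, smul_eq_mul]
      ring
    have := htrp.symm.trans htrp2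
    exact_mod_cast this
  exact ⟨part1, part2, part3, hdim 1 (by norm_num), hdim (-1) (by norm_num)⟩
end

section
/- Let γ_1, …, γ_n be a family of gamma matrices for signature (s,t) with n = s + t, let τ ∈ I_n, and let C be any ℂ-bilinear form on ℂ^N satisfying C(γ_k ψ1, ψ2) = τ C(ψ1, γ_k ψ2) for every index k and all ψ1, ψ2. Then for all ψ1, ψ2 ∈ ℂ^N: (i) C(Γ ψ1, ψ2) = (−1)^{(n−1)⌊n/2⌋} C(ψ1, Γ ψ2), where Γ is the chirality operator; (ii) for every matrix b in the real linear span of {γ_i γ_j : i ≠ j}, C(b ψ1, ψ2) = −C(ψ1, b ψ2); (iii) for every such b, C(exp(b) ψ1, exp(b) ψ2) = C(ψ1, ψ2), where exp is the matrix exponential. -/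
open Matrix

/-- The chirality operator `Γ := i ^ ⌊(s - t + 1)/2⌋ • γ₁ ⋯ γₙ` (floor division on `ℤ`). -/
noncomputable def chirality (s t : ℕ)
    (γ : Fin (s + t) → Matrix (Fin (2 ^ ((s + t) / 2))) (Fin (2 ^ ((s + t) / 2))) ℂ) :
    Matrix (Fin (2 ^ ((s + t) / 2))) (Fin (2 ^ ((s + t) / 2))) ℂ :=
  (Complex.I ^ (Int.fdiv ((s : ℤ) - (t : ℤ) + 1) 2)) • (List.ofFn γ).prod

/-- Membership in the set `I_n`. -/
def MemI (n : ℕ) (τ : ℂ) : Prop :=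
  if Even n then τ = 1 ∨ τ = -1 else τ = (-1 : ℂ) ^ ((n - 1) / 2)

/-!
Encode `C` by its Gram matrix `J`, so that `C (A ψ₁) ψ₂ = C ψ₁ (A' ψ₂)` for all `ψ₁, ψ₂` becomes
`Aᵀ J = J A'`. Such adjoint pairs are closed under products, in reversed order, so `γ₁ ⋯ γₙ` has
adjoint `τⁿ γₙ ⋯ γ₁`; reversing a product of `n` pairwise anticommuting matrices costs the sign
`(-1) ^ (n choose 2)`, and for `τ ∈ I_n` one checks `τⁿ (-1) ^ (n choose 2) = (-1) ^ ((n-1)⌊n/2⌋)`.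
As `τ² = 1`, each `γᵢ γⱼ` with `i ≠ j` has adjoint `τ² γⱼ γᵢ = -γᵢ γⱼ`, and skew-adjoint matrices
form a subspace. Finally `Aᵀ J = J A'` says that `J` semiconjugates `A'` to `Aᵀ`, which passes to
exponentials, so `exp b` has adjoint `exp (-b) = (exp b)⁻¹`.
-/

section Anticommuting

variable {R A : Type*} [CommRing R] [Ring A] [Algebra R A]

theorem List.prod_mul_eq_neg_one_pow_smul {a : A} {l : List A} (h : ∀ b ∈ l, a * b = -(b * a)) :
    l.prod * a = (-1 : R) ^ l.length • (a * l.prod) := by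
  induction l with
  | nil => simp
  | cons b l ih =>
    have hba : b * a = -(a * b) := by rw [h b List.mem_cons_self, neg_neg]
    rw [List.prod_cons, mul_assoc, ih fun c hc => h c (List.mem_cons_of_mem b hc), mul_smul_comm,
      ← mul_assoc, hba, List.length_cons, pow_succ, mul_neg_one, neg_smul, neg_mul, smul_neg,
      mul_assoc]

theorem List.prod_reverse_eq_neg_one_pow_smul {l : List A}
    (h : l.Pairwise fun a b => a * b = -(b * a)) :
    l.reverse.prod = (-1 : R) ^ l.length.choose 2 • l.prod := by
  induction l with
  | nil => simp
  | cons a l ih =>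
    rw [List.pairwise_cons] at h
    rw [List.reverse_cons, List.prod_append, List.prod_singleton, ih h.2, smul_mul_assoc,
      List.prod_mul_eq_neg_one_pow_smul (R := R) h.1, smul_smul, ← pow_add, List.prod_cons,
      List.length_cons, Nat.choose_succ_succ, Nat.choose_one_right, Nat.add_comm]

end Anticommuting

namespace Matrix

variable {n R : Type*} [Fintype n] [CommRing R] {J A A' B B' : Matrix n n R}

namespace IsAdjointPair

theorem mul (hA : J.IsAdjointPair J A A') (hB : J.IsAdjointPair J B B') :
    J.IsAdjointPair J (A * B) (B' * A') := by
  unfold Matrix.IsAdjointPair at *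
  rw [transpose_mul, Matrix.mul_assoc, hA, ← Matrix.mul_assoc, hB, Matrix.mul_assoc]

theorem smul (c : R) (h : J.IsAdjointPair J A A') : J.IsAdjointPair J (c • A) (c • A') := by
  unfold Matrix.IsAdjointPair at *
  rw [transpose_smul, smul_mul, h, Matrix.mul_smul]

variable [DecidableEq n]

theorem list_prod {c : R} {l : List (Matrix n n R)}
    (h : ∀ A ∈ l, J.IsAdjointPair J A (c • A)) :
    J.IsAdjointPair J l.prod (c ^ l.length • l.reverse.prod) := by
  induction l with
  | nil => simp [Matrix.IsAdjointPair]
  | cons A l ih =>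
    rw [List.prod_cons, List.length_cons, List.reverse_cons, List.prod_append,
      List.prod_singleton, pow_succ, ← smul_mul_smul_comm]
    exact (h A List.mem_cons_self).mul (ih fun B hB => h B (List.mem_cons_of_mem A hB))

theorem list_prod_ofFn {m : ℕ} {γ : Fin m → Matrix n n R} {c : R}
    (hγ : ∀ k, J.IsAdjointPair J (γ k) (c • γ k))
    (hanti : ∀ i j, i ≠ j → γ i * γ j = -(γ j * γ i)) :
    J.IsAdjointPair J (List.ofFn γ).prod ((c ^ m * (-1) ^ m.choose 2) • (List.ofFn γ).prod) := by
  have hprod := list_prod (l := List.ofFn γ) (c := c) (by simpa [List.mem_ofFn] using hγ)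
  rwa [List.prod_reverse_eq_neg_one_pow_smul (R := R)
      (List.pairwise_ofFn.2 fun i j hij => hanti i j hij.ne),
    List.length_ofFn, smul_smul] at hprod

theorem exp {𝕂 : Type*} [RCLike 𝕂] {J A A' : Matrix n n 𝕂} (h : J.IsAdjointPair J A A') :
    J.IsAdjointPair J (NormedSpace.exp A) (NormedSpace.exp A') := by
  have hsemi : SemiconjBy J A' Aᵀ := h.symm
  open scoped Norms.Operator in
  exact (exp_transpose A ▸ hsemi.exp_right).symm

end IsAdjointPair

theorem isSkewAdjoint_mul_of_anticommute {c : R} (hc : c * c = 1)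
    (hA : J.IsAdjointPair J A (c • A)) (hB : J.IsAdjointPair J B (c • B))
    (hAB : A * B = -(B * A)) : J.IsSkewAdjoint (A * B) := by
  have := hA.mul hB
  rwa [smul_mul_smul_comm, hc, one_smul, ← neg_eq_iff_eq_neg.2 hAB] at this

end Matrix

theorem isAdjointPair_toMatrix₂'_iff {n R : Type*} [Fintype n] [DecidableEq n] [CommRing R]
    (C : (n → R) →ₗ[R] (n → R) →ₗ[R] R) (A A' : Matrix n n R) :
    (LinearMap.toMatrix₂' R C).IsAdjointPair (LinearMap.toMatrix₂' R C) A A' ↔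
      ∀ x y, C (A *ᵥ x) y = C x (A' *ᵥ y) := by
  rw [← isAdjointPair_toLinearMap₂', Matrix.toLinearMap₂'_toMatrix']
  rfl

theorem MemI.mul_self_eq_one {n : ℕ} {τ : ℂ} (h : MemI n τ) : τ * τ = 1 := by
  unfold MemI at h
  split_ifs at h
  · rcases h with rfl | rfl <;> norm_num
  · rw [h, ← pow_add, ← two_mul, pow_mul]
    norm_num

theorem MemI.pow_mul_neg_one_pow_choose_two {n : ℕ} {τ : ℂ} (h : MemI n τ) :
    τ ^ n * (-1) ^ n.choose 2 = (-1) ^ ((n - 1) * (n / 2)) := by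
  rcases Nat.even_or_odd' n with ⟨m, rfl | rfl⟩
  · have hchoose : (2 * m).choose 2 = (2 * m - 1) * (2 * m / 2) := by
      rw [Nat.choose_two_right, mul_assoc, Nat.mul_div_cancel_left _ two_pos,
        Nat.mul_div_cancel_left _ two_pos, mul_comm]
    rw [pow_mul, sq, h.mul_self_eq_one, one_pow, one_mul, hchoose]
  · have hτ : τ = (-1) ^ m := by
      have h' := h
      unfold MemI at h'
      rwa [if_neg (Nat.not_even_iff_odd.2 (odd_two_mul_add_one m)),
        show (2 * m + 1 - 1) / 2 = m by omega] at h'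
    have hchoose : (2 * m + 1).choose 2 = (2 * m + 1) * m := by
      rw [Nat.choose_two_right, Nat.add_sub_cancel, mul_left_comm,
        Nat.mul_div_cancel_left _ two_pos]
    rw [hτ, hchoose, ← pow_mul, ← pow_add, Nat.add_sub_cancel, show (2 * m + 1) / 2 = m by omega,
      Even.neg_one_pow ⟨m * (2 * m + 1), by ring⟩, Even.neg_one_pow ⟨m * m, by ring⟩]

namespace IsGammaFamily

variable {s t : ℕ} {γ : Fin (s + t) → Matrix (Fin (2 ^ ((s + t) / 2))) (Fin (2 ^ ((s + t) / 2))) ℂ}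

theorem mul_eq_neg_mul (hγ : IsGammaFamily s t γ) {i j : Fin (s + t)} (hij : i ≠ j) :
    γ i * γ j = -(γ j * γ i) := by
  have h := hγ.1 i j
  rw [if_neg hij, zero_smul] at h
  exact eq_neg_of_add_eq_zero_left h

theorem isAdjointPair_chirality (hγ : IsGammaFamily s t γ) {τ : ℂ}
    (hτ : MemI (s + t) τ) {J : Matrix (Fin (2 ^ ((s + t) / 2))) (Fin (2 ^ ((s + t) / 2))) ℂ}
    (hγJ : ∀ k, J.IsAdjointPair J (γ k) (τ • γ k)) :
    J.IsAdjointPair J (chirality s t γ)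
      ((-1 : ℂ) ^ ((s + t - 1) * ((s + t) / 2)) • chirality s t γ) := by
  have h := (IsAdjointPair.list_prod_ofFn hγJ fun _ _ => hγ.mul_eq_neg_mul).smul
    (Complex.I ^ Int.fdiv ((s : ℤ) - t + 1) 2)
  rwa [hτ.pow_mul_neg_one_pow_choose_two, smul_comm] at h

theorem isSkewAdjoint_of_mem_span (hγ : IsGammaFamily s t γ) {τ : ℂ}
    (hτ : τ * τ = 1) {J : Matrix (Fin (2 ^ ((s + t) / 2))) (Fin (2 ^ ((s + t) / 2))) ℂ}
    (hγJ : ∀ k, J.IsAdjointPair J (γ k) (τ • γ k)) :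
    ∀ b ∈ Submodule.span ℝ {M | ∃ i j : Fin (s + t), i ≠ j ∧ M = γ i * γ j},
      J.IsSkewAdjoint b := by
  intro b hb
  rw [← mem_skewAdjointMatricesSubmodule]
  refine Submodule.span_le (p := (skewAdjointMatricesSubmodule J).restrictScalars ℝ) |>.2 ?_ hb
  rintro _ ⟨i, j, hij, rfl⟩
  exact (mem_skewAdjointMatricesSubmodule J _).2
    (isSkewAdjoint_mul_of_anticommute hτ (hγJ i) (hγJ j) (hγ.mul_eq_neg_mul hij))

end IsGammaFamily

theorem majorana_form_properties_general (s t : ℕ)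
    (γ : Fin (s + t) → Matrix (Fin (2 ^ ((s + t) / 2))) (Fin (2 ^ ((s + t) / 2))) ℂ)
    (hγ : IsGammaFamily s t γ) (τ : ℂ) (hτ : MemI (s + t) τ)
    (C : (Fin (2 ^ ((s + t) / 2)) → ℂ) →ₗ[ℂ] (Fin (2 ^ ((s + t) / 2)) → ℂ) →ₗ[ℂ] ℂ)
    (hC : ∀ (k : Fin (s + t)) (ψ₁ ψ₂ : Fin (2 ^ ((s + t) / 2)) → ℂ),
      C (γ k *ᵥ ψ₁) ψ₂ = τ * C ψ₁ (γ k *ᵥ ψ₂)) :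
    (∀ ψ₁ ψ₂ : Fin (2 ^ ((s + t) / 2)) → ℂ,
      C ((chirality s t γ) *ᵥ ψ₁) ψ₂
        = ((-1 : ℂ) ^ ((s + t - 1) * ((s + t) / 2))) * C ψ₁ ((chirality s t γ) *ᵥ ψ₂)) ∧
    (∀ b ∈ Submodule.span ℝ
        {M : Matrix (Fin (2 ^ ((s + t) / 2))) (Fin (2 ^ ((s + t) / 2))) ℂ |
          ∃ i j : Fin (s + t), i ≠ j ∧ M = γ i * γ j},
      ∀ ψ₁ ψ₂ : Fin (2 ^ ((s + t) / 2)) → ℂ,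
        C (b *ᵥ ψ₁) ψ₂ = -C ψ₁ (b *ᵥ ψ₂)) ∧
    (∀ b ∈ Submodule.span ℝ
        {M : Matrix (Fin (2 ^ ((s + t) / 2))) (Fin (2 ^ ((s + t) / 2))) ℂ |
          ∃ i j : Fin (s + t), i ≠ j ∧ M = γ i * γ j},
      ∀ ψ₁ ψ₂ : Fin (2 ^ ((s + t) / 2)) → ℂ,
        C ((NormedSpace.exp b) *ᵥ ψ₁) ((NormedSpace.exp b) *ᵥ ψ₂) = C ψ₁ ψ₂) := by
  set J := LinearMap.toMatrix₂' ℂ C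
  have hJ := isAdjointPair_toMatrix₂'_iff C
  have hγJ : ∀ k, J.IsAdjointPair J (γ k) (τ • γ k) := fun k =>
    (hJ _ _).2 fun ψ₁ ψ₂ => by rw [hC, smul_mulVec, map_smul, smul_eq_mul]
  have hskew := hγ.isSkewAdjoint_of_mem_span hτ.mul_self_eq_one hγJ
  refine ⟨fun ψ₁ ψ₂ => ?_, fun b hb ψ₁ ψ₂ => ?_, fun b hb ψ₁ ψ₂ => ?_⟩
  · rw [(hJ _ _).1 (hγ.isAdjointPair_chirality hτ hγJ), smul_mulVec, map_smul, smul_eq_mul]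
  · rw [(hJ _ _).1 (hskew b hb), neg_mulVec, map_neg]
  · rw [(hJ _ _).1 (IsAdjointPair.exp (hskew b hb)), mulVec_mulVec,
      ← exp_add_of_commute _ _ (Commute.refl b).neg_left, neg_add_cancel, NormedSpace.exp_zero,
      one_mulVec]

/-- if a `ℂ`-bilinear form `C` on `ℂ^N` intertwines Clifford multiplication
with the sign `τ ∈ I_n`, then: (i) `C(Γ ψ₁, ψ₂) = (-1) ^ ((n-1)⌊n/2⌋) C(ψ₁, Γ ψ₂)`;
(ii) `C(b ψ₁, ψ₂) = -C(ψ₁, b ψ₂)` for every `b` in the real span of `{γᵢ γⱼ : i ≠ j}`;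
(iii) `C(exp(b) ψ₁, exp(b) ψ₂) = C(ψ₁, ψ₂)` for every such `b`. -/
theorem majorana_form_properties (s t : ℕ) (hn : 1 ≤ s + t)
    (γ : Fin (s + t) → Matrix (Fin (2 ^ ((s + t) / 2))) (Fin (2 ^ ((s + t) / 2))) ℂ)
    (hγ : IsGammaFamily s t γ) (τ : ℂ) (hτ : MemI (s + t) τ)
    (C : (Fin (2 ^ ((s + t) / 2)) → ℂ) →ₗ[ℂ] (Fin (2 ^ ((s + t) / 2)) → ℂ) →ₗ[ℂ] ℂ)
    (hC : ∀ (k : Fin (s + t)) (ψ₁ ψ₂ : Fin (2 ^ ((s + t) / 2)) → ℂ),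
      C (γ k *ᵥ ψ₁) ψ₂ = τ * C ψ₁ (γ k *ᵥ ψ₂)) :
    (∀ ψ₁ ψ₂ : Fin (2 ^ ((s + t) / 2)) → ℂ,
      C ((chirality s t γ) *ᵥ ψ₁) ψ₂
        = ((-1 : ℂ) ^ ((s + t - 1) * ((s + t) / 2))) * C ψ₁ ((chirality s t γ) *ᵥ ψ₂)) ∧
    (∀ b ∈ Submodule.span ℝ
        {M : Matrix (Fin (2 ^ ((s + t) / 2))) (Fin (2 ^ ((s + t) / 2))) ℂ |
          ∃ i j : Fin (s + t), i ≠ j ∧ M = γ i * γ j},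
      ∀ ψ₁ ψ₂ : Fin (2 ^ ((s + t) / 2)) → ℂ,
        C (b *ᵥ ψ₁) ψ₂ = -C ψ₁ (b *ᵥ ψ₂)) ∧
    (∀ b ∈ Submodule.span ℝ
        {M : Matrix (Fin (2 ^ ((s + t) / 2))) (Fin (2 ^ ((s + t) / 2))) ℂ |
          ∃ i j : Fin (s + t), i ≠ j ∧ M = γ i * γ j},
      ∀ ψ₁ ψ₂ : Fin (2 ^ ((s + t) / 2)) → ℂ,
        C ((NormedSpace.exp b) *ᵥ ψ₁) ((NormedSpace.exp b) *ᵥ ψ₂) = C ψ₁ ψ₂) :=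
  majorana_form_properties_general s t γ hγ τ hτ C hC
end

section
/- Suppose s − t is even (so n = s + t is even), let γ_1, …, γ_n be a family of gamma matrices for signature (s,t), and let j_+ and j_− be bijective conjugate-linear maps on ℂ^N satisfying j_+(γ_k ψ) = γ_k j_+(ψ) and j_−(γ_k ψ) = −γ_k j_−(ψ) for every index k and all ψ. Then there exists a nonzero constant ζ ∈ ℂ with j_− = ζ · Γ ∘ j_+, where Γ is the chirality operator; if moreover j_+ and j_− are anti-unitary for the standard Hermitian product on ℂ^N, then |ζ| = 1. -/
open Matrix

/-!
Since `jp` is bijective and both maps are conjugate-linear, `jm ∘ jp⁻¹` is complex linear,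
i.e. a matrix `M`, and `M` anticommutes with every `γₖ`. For `n` even the chirality operator `Γ`
is unitary and anticommutes with every `γₖ` too, so `Γ⁻¹ M` commutes with all of them. That
commutant is the scalars: the ordered monomials `γ_S` (`S ⊆ {1, …, n}`) are eigenvectors of
`B ↦ ∑ₖ 2ᵏ γₖ⁻¹ B γₖ` with pairwise distinct eigenvalues, hence a basis of the `2ⁿ`-dimensional
matrix algebra, and a matrix commuting with all `γₖ` is an eigenvector for the eigenvalue of
`γ_∅ = 1`. So `jm = ζ Γ jp`, with `ζ ≠ 0` as `jm` is onto, and `|ζ| = 1` when both maps are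
anti-unitary because `Γ` preserves the Hermitian product.
-/

open Finset

section CliffordMonomial

variable {R : Type*} [Ring R] {n : ℕ}

def cliffordMonomial (γ : Fin n → R) (S : Finset (Fin n)) : R :=
  ((S.sort (· ≤ ·)).map γ).prod

variable {γ : Fin n → R}

lemma mul_list_prod_map_of_anticomm (hγ : Pairwise fun j l => γ j * γ l = -(γ l * γ j))
    (k : Fin n) (L : List (Fin n)) :
    γ k * (L.map γ).prod = (-1) ^ L.countP (· ≠ k) * ((L.map γ).prod * γ k) := by
  induction L with
  | nil => simp
  | cons a L ih =>
    have hcomm (x : R) : Commute x ((-1) ^ L.countP (· ≠ k)) :=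
      ((Commute.neg_one_left x).pow_left _).symm
    rw [List.map_cons, List.prod_cons]
    by_cases h : a = k
    · subst h
      rw [List.countP_cons_of_neg (by simp), mul_assoc (γ a) _ (γ a)]
      conv_lhs => rw [ih, (hcomm _).left_comm]
    · rw [List.countP_cons_of_pos (by simpa using h), pow_succ, ← mul_assoc, hγ (Ne.symm h),
        neg_mul, mul_assoc, ih, (hcomm _).left_comm]
      simp only [mul_assoc, neg_mul, mul_neg, mul_one]

lemma countP_sort_ne (S : Finset (Fin n)) (k : Fin n) :
    (S.sort (· ≤ ·)).countP (· ≠ k) = #(S.erase k) := by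
  rw [← Multiset.coe_countP, Finset.sort_eq, ← Finset.filter_ne', Finset.card_def,
    Finset.filter_val, Multiset.countP_eq_card_filter]

lemma mul_cliffordMonomial (hγ : Pairwise fun j l => γ j * γ l = -(γ l * γ j))
    (k : Fin n) (S : Finset (Fin n)) :
    γ k * cliffordMonomial γ S = (-1) ^ #(S.erase k) * (cliffordMonomial γ S * γ k) := by
  rw [cliffordMonomial, mul_list_prod_map_of_anticomm hγ, countP_sort_ne]

lemma cliffordMonomial_mul (hγ : Pairwise fun j l => γ j * γ l = -(γ l * γ j))
    (k : Fin n) (S : Finset (Fin n)) :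
    cliffordMonomial γ S * γ k = (-1) ^ #(S.erase k) * (γ k * cliffordMonomial γ S) := by
  rw [mul_cliffordMonomial hγ, ← mul_assoc, ← pow_add, ← two_mul, pow_mul, neg_one_sq, one_pow,
    one_mul]

@[simp]
lemma cliffordMonomial_empty : cliffordMonomial γ ∅ = 1 := by
  simp [cliffordMonomial]

lemma cliffordMonomial_univ : cliffordMonomial γ univ = (List.ofFn γ).prod := by
  rw [cliffordMonomial, Fin.sort_univ, List.ofFn_eq_map]

lemma isUnit_cliffordMonomial (hγ : ∀ k, IsUnit (γ k)) (S : Finset (Fin n)) :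
    IsUnit (cliffordMonomial γ S) :=
  List.prod_isUnit fun _ hx => by
    obtain ⟨j, -, rfl⟩ := List.mem_map.1 hx
    exact hγ j

end CliffordMonomial

section SignPatterns

lemma even_card_erase_iff {α : Type*} [DecidableEq α] (S : Finset α) (k : α) :
    Even #(S.erase k) ↔ (Even #S ↔ k ∉ S) := by
  by_cases hk : k ∈ S
  · rw [← Finset.card_erase_add_one hk, Nat.even_add_one]
    simp [hk]
  · simp [hk]

-- If the parities of `#S` and `#T` differ, the hypothesis forces `T = Sᶜ`, whose parity
-- agrees with that of `S` in even cardinality.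
lemma eq_of_forall_even_card_erase_iff {α : Type*} [Fintype α] [DecidableEq α]
    (hα : Even (Fintype.card α)) {S T : Finset α}
    (h : ∀ k, Even #(S.erase k) ↔ Even #(T.erase k)) : S = T := by
  simp only [even_card_erase_iff] at h
  by_cases hST : Even #S ↔ Even #T
  · ext k
    have := h k
    tauto
  · have hT : T = Sᶜ := by
      ext k
      have := h k
      rw [mem_compl]
      tauto
    rw [hT, card_compl, Nat.even_sub (card_le_univ S)] at hST
    tauto

lemma sum_sign_mul_two_pow_injective {n : ℕ} :
    Function.Injective fun D : Finset (Fin n) =>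
      ∑ k, (if k ∈ D then 1 else -1 : ℤ) * 2 ^ (k : ℕ) := by
  intro D E h
  have key (D : Finset (Fin n)) : ∑ k, (if k ∈ D then 1 else -1 : ℤ) * 2 ^ (k : ℕ)
      = 2 * ((∑ i ∈ D.map Fin.valEmbedding, 2 ^ i : ℕ) : ℤ) - ∑ k : Fin n, 2 ^ (k : ℕ) := by
    rw [Nat.cast_sum, sum_map, ← sum_ite_mem_eq D, mul_sum, ← sum_sub_distrib]
    refine sum_congr rfl fun k _ => ?_
    split_ifs <;> push_cast [Fin.valEmbedding_apply] <;> ring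
  simp only [key, sub_left_inj] at h
  exact map_injective _
    (geomSum_injective le_rfl (Nat.cast_inj.mp (mul_left_cancel₀ two_ne_zero h)))

def monomialWeight {n : ℕ} (S : Finset (Fin n)) : ℤ :=
  ∑ k, (-1) ^ #(S.erase k) * 2 ^ (k : ℕ)

lemma monomialWeight_injective {n : ℕ} (hn : Even n) :
    Function.Injective (monomialWeight (n := n)) := by
  intro S T h
  have hw (S : Finset (Fin n)) : monomialWeight S = ∑ k,
      (if k ∈ ({k | Even #(S.erase k)} : Finset (Fin n)) then 1 else -1 : ℤ) * 2 ^ (k : ℕ) := by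
    simp only [monomialWeight, mem_filter, mem_univ, true_and, neg_one_pow_eq_ite]
  rw [hw, hw] at h
  have hD := sum_sign_mul_two_pow_injective h
  refine eq_of_forall_even_card_erase_iff (by simpa using hn) fun k => ?_
  simpa using congr(k ∈ $hD)

end SignPatterns

lemma Module.Basis.exists_eq_smul_of_apply_eq_smul {K V ι : Type*} [Field K] [AddCommGroup V]
    [Module K V] [Fintype ι] {f : Module.End K V} {μ : ι → K} (hμ : Function.Injective μ)
    (b : Module.Basis ι K V) (hb : ∀ j, f (b j) = μ j • b j) {i : ι} {x : V}
    (hx : f x = μ i • x) : ∃ c : K, x = c • b i := by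
  have hexp : ∑ j, (b.repr x j * (μ j - μ i)) • b j = 0 := by
    calc ∑ j, (b.repr x j * (μ j - μ i)) • b j = f x - μ i • x := by
          conv_rhs => rw [← b.sum_repr x]
          simp only [map_sum, map_smul, hb, smul_sum, smul_smul, ← sum_sub_distrib, ← sub_smul]
          exact sum_congr rfl fun j _ => by ring_nf
      _ = 0 := by rw [hx, sub_self]
  have hcoef := Fintype.linearIndependent_iff.1 b.linearIndependent _ hexp
  refine ⟨b.repr x i, ?_⟩
  conv_lhs => rw [← b.sum_repr x]
  refine sum_eq_single i (fun j _ hj => ?_) (by simp)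
  rw [(mul_eq_zero.1 (hcoef j)).resolve_right (sub_ne_zero.2 (hμ.ne hj)), zero_smul]

section Commutant

variable {K A : Type*} [Field K] [Ring A] [Algebra K A] {n : ℕ} {γ : Fin n → A}

variable (K) in
noncomputable def weightedConjugation (γ : Fin n → A) : Module.End K A :=
  ∑ k : Fin n, (2 : K) ^ (k : ℕ) •
    (LinearMap.mulLeft K (Ring.inverse (γ k)) ∘ₗ LinearMap.mulRight K (γ k))

lemma weightedConjugation_apply (a : A) :
    weightedConjugation K γ a =
      ∑ k : Fin n, (2 : K) ^ (k : ℕ) • (Ring.inverse (γ k) * a * γ k) := by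
  simp [weightedConjugation, mul_assoc]

lemma weightedConjugation_cliffordMonomial (hγ : Pairwise fun j l => γ j * γ l = -(γ l * γ j))
    (hunit : ∀ k, IsUnit (γ k)) (S : Finset (Fin n)) :
    weightedConjugation K γ (cliffordMonomial γ S) =
      (monomialWeight S : K) • cliffordMonomial γ S := by
  rw [weightedConjugation_apply, monomialWeight, Int.cast_sum, sum_smul]
  refine sum_congr rfl fun k _ => ?_
  rw [mul_assoc, cliffordMonomial_mul hγ, ((Commute.neg_one_left _).pow_left _).left_comm,
    ← mul_assoc, Ring.inverse_mul_cancel _ (hunit k), one_mul]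
  have hsign : (-1 : A) ^ #(S.erase k) = algebraMap K A ((-1) ^ #(S.erase k)) := by simp
  rw [hsign, ← Algebra.smul_def, smul_smul]
  push_cast
  rw [mul_comm]

lemma weightedConjugation_of_forall_commute (hunit : ∀ k, IsUnit (γ k)) {a : A}
    (ha : ∀ k, Commute (γ k) a) :
    weightedConjugation K γ a = (monomialWeight (∅ : Finset (Fin n)) : K) • a := by
  rw [weightedConjugation_apply, monomialWeight, Int.cast_sum, sum_smul]
  refine sum_congr rfl fun k _ => ?_
  rw [mul_assoc, ← (ha k).eq, ← mul_assoc, Ring.inverse_mul_cancel _ (hunit k), one_mul]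
  simp

theorem exists_eq_algebraMap_of_forall_commute [CharZero K] [Nontrivial A] (hn : Even n)
    (hdim : Module.finrank K A = 2 ^ n) (hγ : Pairwise fun j l => γ j * γ l = -(γ l * γ j))
    (hunit : ∀ k, IsUnit (γ k)) {a : A} (ha : ∀ k, Commute (γ k) a) :
    ∃ c : K, a = algebraMap K A c := by
  have hμ : Function.Injective fun S : Finset (Fin n) => (monomialWeight S : K) :=
    Int.cast_injective.comp (monomialWeight_injective hn)
  have hli : LinearIndependent K (cliffordMonomial γ) :=
    Module.End.eigenvectors_linearIndependent' (weightedConjugation K γ) _ hμ _ fun S =>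
      Module.End.hasEigenvector_iff.2
        ⟨Module.End.mem_eigenspace_iff.2 (weightedConjugation_cliffordMonomial hγ hunit S),
          (isUnit_cliffordMonomial hunit S).ne_zero⟩
  let b := basisOfLinearIndependentOfCardEqFinrank hli (by simp [hdim])
  obtain ⟨c, hc⟩ := b.exists_eq_smul_of_apply_eq_smul hμ
    (by simpa [b] using weightedConjugation_cliffordMonomial hγ hunit)
    (weightedConjugation_of_forall_commute hunit ha) (i := ∅)
  exact ⟨c, by simpa [b, Algebra.algebraMap_eq_smul_one] using hc⟩

end Commutant

lemma commute_star_mul_of_anticomm {R : Type*} [Ring R] [StarMul R] {x u m : R}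
    (hu : u ∈ unitary R) (hxu : x * u = -(u * x)) (hxm : x * m = -(m * x)) :
    Commute x (star u * m) := by
  have hux : u * x = -(x * u) := by rw [hxu, neg_neg]
  have hxu' : x * star u = -(star u * x) := by
    calc x * star u = star u * (u * x) * star u := by
          rw [← mul_assoc, Unitary.star_mul_self_of_mem hu, one_mul]
      _ = -(star u * x * (u * star u)) := by rw [hux]; noncomm_ring
      _ = -(star u * x) := by rw [Unitary.mul_star_self_of_mem hu, mul_one]
  calc x * (star u * m) = -(star u * (x * m)) := by rw [← mul_assoc, hxu']; noncomm_ring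
    _ = star u * m * x := by rw [hxm]; noncomm_ring

lemma exists_matrix_mulVec_eq_of_bijective {K m : Type*} [CommRing K] [Fintype m] [DecidableEq m]
    {σ σ' : K →+* K} [RingHomInvPair σ σ'] [RingHomInvPair σ' σ]
    (f g : (m → K) →ₛₗ[σ] (m → K)) (hf : Function.Bijective f) :
    ∃ M : Matrix m m K, ∀ ψ, g ψ = M *ᵥ f ψ := by
  let e := LinearEquiv.ofBijective f hf
  refine ⟨LinearMap.toMatrix' (g ∘ₛₗ e.symm.toLinearMap), fun ψ => ?_⟩
  rw [LinearMap.toMatrix'_mulVec, LinearMap.comp_apply, LinearEquiv.coe_coe,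
    LinearEquiv.ofBijective_symm_apply_apply]

lemma finrank_matrix_two_pow_half {K : Type*} [Field K] {n : ℕ} (hn : Even n) :
    Module.finrank K (Matrix (Fin (2 ^ (n / 2))) (Fin (2 ^ (n / 2))) K) = 2 ^ n := by
  rw [Module.finrank_matrix, Module.finrank_self, Fintype.card_fin, mul_one, ← pow_add]
  obtain ⟨r, rfl⟩ := hn
  congr 1
  omega

lemma star_mulVec_dotProduct_mulVec_of_mem_unitaryGroup {m : Type*} [Fintype m] [DecidableEq m]
    {U : Matrix m m ℂ} (hU : U ∈ unitaryGroup m ℂ) (v : m → ℂ) :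
    star (U *ᵥ v) ⬝ᵥ (U *ᵥ v) = star v ⬝ᵥ v := by
  rw [star_mulVec, ← dotProduct_mulVec, mulVec_mulVec, ← star_eq_conjTranspose,
    Unitary.star_mul_self_of_mem hU, one_mulVec]

lemma norm_eq_one_of_dotProduct_self_smul_eq {m : Type*} [Fintype m] {ζ : ℂ} {v w : m → ℂ}
    (hv : v ≠ 0) (hw : star w ⬝ᵥ w = star v ⬝ᵥ v)
    (h : star (ζ • w) ⬝ᵥ (ζ • w) = star v ⬝ᵥ v) : ‖ζ‖ = 1 := by
  have hv' : star v ⬝ᵥ v ≠ 0 := by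
    open scoped ComplexOrder in exact dotProduct_star_self_eq_zero.not.2 hv
  rw [star_smul, smul_dotProduct, dotProduct_smul, hw, smul_eq_mul, smul_eq_mul,
    ← mul_assoc] at h
  exact CStarRing.norm_of_mem_unitary
    (Unitary.mem_iff_star_mul_self.2 ((mul_eq_right₀ hv').1 h))

section GammaMatrices

variable {s t : ℕ}
  {γ : Fin (s + t) → Matrix (Fin (2 ^ ((s + t) / 2))) (Fin (2 ^ ((s + t) / 2))) ℂ}

lemma IsGammaFamily.mul_self_s9 (hγ : IsGammaFamily s t γ) (k : Fin (s + t)) :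
    γ k * γ k = (if (k : ℕ) < t then 1 else -1 : ℂ) • 1 := by
  have h := hγ.1 k k
  rw [if_pos rfl, ← two_smul ℂ] at h
  apply smul_right_injective _ (two_ne_zero : (2 : ℂ) ≠ 0)
  simp only [h, smul_smul]
  split_ifs <;> norm_num

lemma IsGammaFamily.anticomm_s9 (hγ : IsGammaFamily s t γ) :
    Pairwise fun j l => γ j * γ l = -(γ l * γ j) := fun j l hjl =>
  eq_neg_of_add_eq_zero_left (by simpa [hjl] using hγ.1 j l)

lemma IsGammaFamily.mem_unitaryGroup (hγ : IsGammaFamily s t γ) (k : Fin (s + t)) :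
    γ k ∈ unitaryGroup _ ℂ := by
  rw [mem_unitaryGroup_iff', star_eq_conjTranspose, hγ.2 k]
  split_ifs with hk <;> simp [hγ.mul_self_s9, hk]

lemma IsGammaFamily.isUnit_s9 (hγ : IsGammaFamily s t γ) (k : Fin (s + t)) : IsUnit (γ k) :=
  Unitary.isUnit_coe (U := ⟨γ k, hγ.mem_unitaryGroup k⟩)

lemma IsGammaFamily.chirality_mem_unitaryGroup (hγ : IsGammaFamily s t γ) :
    chirality s t γ ∈ unitaryGroup _ ℂ := by
  have hI : Complex.I ^ (Int.fdiv ((s : ℤ) - (t : ℤ) + 1) 2) ∈ unitary ℂ := by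
    rw [Unitary.mem_iff_star_mul_self, Complex.star_def, map_zpow₀, ← mul_zpow, Complex.conj_I,
      neg_mul, Complex.I_mul_I, neg_neg, _root_.one_zpow]
  refine Unitary.smul_mem_of_mem hI (list_prod_mem fun x hx => ?_)
  obtain ⟨k, rfl⟩ := List.mem_ofFn.1 hx
  exact hγ.mem_unitaryGroup k

lemma IsGammaFamily.mul_chirality (hγ : IsGammaFamily s t γ) (hn : Even (s + t))
    (k : Fin (s + t)) : γ k * chirality s t γ = -(chirality s t γ * γ k) := by
  have hodd : Odd (s + t - 1) := Nat.Even.sub_odd k.pos hn odd_one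
  rw [chirality, ← cliffordMonomial_univ, mul_smul_comm, mul_cliffordMonomial hγ.anticomm_s9,
    card_erase_of_mem (mem_univ k), card_univ, Fintype.card_fin, hodd.neg_one_pow, neg_one_mul,
    smul_mul_assoc, smul_neg]

lemma IsGammaFamily.exists_eq_smul_chirality (hγ : IsGammaFamily s t γ) (hn : Even (s + t))
    {M : Matrix (Fin (2 ^ ((s + t) / 2))) (Fin (2 ^ ((s + t) / 2))) ℂ}
    (hM : ∀ k, γ k * M = -(M * γ k)) : ∃ z : ℂ, M = z • chirality s t γ := by
  have hΓ := hγ.chirality_mem_unitaryGroup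
  obtain ⟨z, hz⟩ := exists_eq_algebraMap_of_forall_commute (K := ℂ) hn
    (finrank_matrix_two_pow_half hn) hγ.anticomm_s9 hγ.isUnit_s9
    (a := star (chirality s t γ) * M)
    fun k => commute_star_mul_of_anticomm hΓ (hγ.mul_chirality hn k) (hM k)
  refine ⟨z, ?_⟩
  calc M = chirality s t γ * (star (chirality s t γ) * M) := by
        rw [← mul_assoc, Unitary.mul_star_self_of_mem hΓ, one_mul]
    _ = z • chirality s t γ := by
        rw [hz, Algebra.algebraMap_eq_smul_one, mul_smul_comm, mul_one]

end GammaMatrices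

theorem conjugations_related_by_chirality_general (s t : ℕ)
    (heven : Even ((s : ℤ) - (t : ℤ)))
    (γ : Fin (s + t) → Matrix (Fin (2 ^ ((s + t) / 2))) (Fin (2 ^ ((s + t) / 2))) ℂ)
    (hγ : IsGammaFamily s t γ)
    (jp jm : (Fin (2 ^ ((s + t) / 2)) → ℂ) → (Fin (2 ^ ((s + t) / 2)) → ℂ))
    (hpbij : Function.Bijective jp) (hmbij : Function.Bijective jm)
    (hpadd : ∀ ψ₁ ψ₂, jp (ψ₁ + ψ₂) = jp ψ₁ + jp ψ₂)
    (hpsmul : ∀ (c : ℂ) ψ, jp (c • ψ) = (starRingEnd ℂ c) • jp ψ)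
    (hmadd : ∀ ψ₁ ψ₂, jm (ψ₁ + ψ₂) = jm ψ₁ + jm ψ₂)
    (hmsmul : ∀ (c : ℂ) ψ, jm (c • ψ) = (starRingEnd ℂ c) • jm ψ)
    (hpγ : ∀ (k : Fin (s + t)) ψ, jp (γ k *ᵥ ψ) = γ k *ᵥ jp ψ)
    (hmγ : ∀ (k : Fin (s + t)) ψ, jm (γ k *ᵥ ψ) = -(γ k *ᵥ jm ψ)) :
    ∃ ζ : ℂ, ζ ≠ 0 ∧
      (∀ ψ, jm ψ = ζ • ((chirality s t γ) *ᵥ jp ψ)) ∧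
      ((∀ ψ₁ ψ₂, star (jp ψ₁) ⬝ᵥ (jp ψ₂) = star ψ₂ ⬝ᵥ ψ₁) →
        (∀ ψ₁ ψ₂, star (jm ψ₁) ⬝ᵥ (jm ψ₂) = star ψ₂ ⬝ᵥ ψ₁) →
        ‖ζ‖ = 1) := by
  have hn : Even (s + t) := by
    rw [← Int.even_coe_nat, Nat.cast_add, Int.even_add, ← Int.even_sub]
    exact heven
  obtain ⟨M, hM⟩ : ∃ M : Matrix _ _ ℂ, ∀ ψ, jm ψ = M *ᵥ jp ψ :=
    exists_matrix_mulVec_eq_of_bijective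
      (⟨⟨jp, hpadd⟩, hpsmul⟩ : _ →ₛₗ[starRingEnd ℂ] _) ⟨⟨jm, hmadd⟩, hmsmul⟩ hpbij
  have hManti (k : Fin (s + t)) : γ k * M = -(M * γ k) := by
    refine ext_iff_mulVec.2 fun v => ?_
    obtain ⟨ψ, rfl⟩ := hpbij.2 v
    rw [← mulVec_mulVec, ← hM, neg_mulVec, ← mulVec_mulVec, ← hpγ, ← hM, hmγ, neg_neg]
  obtain ⟨ζ, rfl⟩ := hγ.exists_eq_smul_chirality hn hManti
  have hjm (ψ) : jm ψ = ζ • (chirality s t γ *ᵥ jp ψ) := (hM ψ).trans (smul_mulVec _ _ _)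
  refine ⟨ζ, ?_, hjm, fun hp hm => ?_⟩
  · rintro rfl
    obtain ⟨v, hv⟩ := exists_ne (0 : Fin (2 ^ ((s + t) / 2)) → ℂ)
    obtain ⟨ψ, rfl⟩ := hmbij.2 v
    exact hv (by simp [hjm])
  · obtain ⟨ψ, hψ⟩ := exists_ne (0 : Fin (2 ^ ((s + t) / 2)) → ℂ)
    refine norm_eq_one_of_dotProduct_self_smul_eq hψ
      ((star_mulVec_dotProduct_mulVec_of_mem_unitaryGroup hγ.chirality_mem_unitaryGroup _).trans
        (hp ψ ψ)) ?_
    rw [← hjm]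
    exact hm ψ ψ

/-- when `s - t` is even, any two bijective conjugate-linear maps `j₊` and `j₋`
commuting resp. anticommuting with all gamma matrices are related by `j₋ = ζ • Γ ∘ j₊` for
some nonzero constant `ζ ∈ ℂ`; if both maps are moreover anti-unitary for the standard
Hermitian product, then `|ζ| = 1`. -/
theorem conjugations_related_by_chirality (s t : ℕ) (hn : 1 ≤ s + t)
    (heven : Even ((s : ℤ) - (t : ℤ)))
    (γ : Fin (s + t) → Matrix (Fin (2 ^ ((s + t) / 2))) (Fin (2 ^ ((s + t) / 2))) ℂ)
    (hγ : IsGammaFamily s t γ)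
    (jp jm : (Fin (2 ^ ((s + t) / 2)) → ℂ) → (Fin (2 ^ ((s + t) / 2)) → ℂ))
    (hpbij : Function.Bijective jp) (hmbij : Function.Bijective jm)
    (hpadd : ∀ ψ₁ ψ₂, jp (ψ₁ + ψ₂) = jp ψ₁ + jp ψ₂)
    (hpsmul : ∀ (c : ℂ) ψ, jp (c • ψ) = (starRingEnd ℂ c) • jp ψ)
    (hmadd : ∀ ψ₁ ψ₂, jm (ψ₁ + ψ₂) = jm ψ₁ + jm ψ₂)
    (hmsmul : ∀ (c : ℂ) ψ, jm (c • ψ) = (starRingEnd ℂ c) • jm ψ)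
    (hpγ : ∀ (k : Fin (s + t)) ψ, jp (γ k *ᵥ ψ) = γ k *ᵥ jp ψ)
    (hmγ : ∀ (k : Fin (s + t)) ψ, jm (γ k *ᵥ ψ) = -(γ k *ᵥ jm ψ)) :
    ∃ ζ : ℂ, ζ ≠ 0 ∧
      (∀ ψ, jm ψ = ζ • ((chirality s t γ) *ᵥ jp ψ)) ∧
      ((∀ ψ₁ ψ₂, star (jp ψ₁) ⬝ᵥ (jp ψ₂) = star ψ₂ ⬝ᵥ ψ₁) →
        (∀ ψ₁ ψ₂, star (jm ψ₁) ⬝ᵥ (jm ψ₂) = star ψ₂ ⬝ᵥ ψ₁) →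
        ‖ζ‖ = 1) :=
  conjugations_related_by_chirality_general s t heven γ hγ jp jm hpbij hmbij hpadd hpsmul hmadd
    hmsmul hpγ hmγ
end

section
/- With the Kronecker-product construction below, the higher-dimensional chirality operator Γ_P := i^⌊(m+k−1)/2⌋ Γ_0 Γ_1 ⋯ Γ_{m+k−1} satisfies the factorization Γ_P = (Γ_M)^{k+1} ⊗ Γ_K; in particular Γ_P = Γ_M ⊗ Γ_K if k is even and Γ_P = I ⊗ Γ_K if k is odd. -/
/-!
The first `m` factors of `Γ_P` are `γ_μ ⊗ I` and the last `k` are `Γ_M ⊗ γ̃_j`, so the product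
is `(γ_0 ⋯ γ_{m-1} Γ_M ^ k) ⊗ (γ̃_1 ⋯ γ̃_k)`. Since `m` is even and positive, the phase splits as
`i ^ ⌊(m+k-1)/2⌋ = i ^ ⌊(m-1)/2⌋ · i ^ ⌊(k+1)/2⌋`, and the two pieces absorb into `Γ_M ^ (k+1)`
and `Γ_K`. The parity cases follow from `Γ_M ^ 2 = I`, a sign count using the Clifford relations.
-/

open Matrix Kronecker

/-- The Minkowski chirality operator `Γ_M := i ^ ⌊(m-1)/2⌋ γ₀ ⋯ γ_{m-1}`. -/
noncomputable def minkChirality (m : ℕ)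
    (γ : Fin m → Matrix (Fin (2 ^ (m / 2))) (Fin (2 ^ (m / 2))) ℂ) :
    Matrix (Fin (2 ^ (m / 2))) (Fin (2 ^ (m / 2))) ℂ :=
  (Complex.I ^ ((m - 1) / 2)) • (List.ofFn γ).prod

/-- The internal chirality operator `Γ_K := i ^ ⌊(k+1)/2⌋ γ̃₁ ⋯ γ̃_k`. -/
noncomputable def intChirality (k : ℕ)
    (γt : Fin k → Matrix (Fin (2 ^ (k / 2))) (Fin (2 ^ (k / 2))) ℂ) :
    Matrix (Fin (2 ^ (k / 2))) (Fin (2 ^ (k / 2))) ℂ :=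
  (Complex.I ^ ((k + 1) / 2)) • (List.ofFn γt).prod

/-- The Kronecker-product construction of higher-dimensional gamma matrices. -/
noncomputable def bigGamma (m k : ℕ)
    (γ : Fin m → Matrix (Fin (2 ^ (m / 2))) (Fin (2 ^ (m / 2))) ℂ)
    (γt : Fin k → Matrix (Fin (2 ^ (k / 2))) (Fin (2 ^ (k / 2))) ℂ) :
    Fin (m + k) →
      Matrix (Fin (2 ^ (m / 2)) × Fin (2 ^ (k / 2))) (Fin (2 ^ (m / 2)) × Fin (2 ^ (k / 2))) ℂ :=
  fun a =>
    if h : (a : ℕ) < m then (γ ⟨a, h⟩) ⊗ₖ (1 : Matrix (Fin (2 ^ (k / 2))) (Fin (2 ^ (k / 2))) ℂ)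
    else (minkChirality m γ) ⊗ₖ (γt ⟨(a : ℕ) - m, by have := a.isLt; omega⟩)

/-- The higher-dimensional chirality operator
`Γ_P := i ^ ⌊(m+k-1)/2⌋ Γ₀ Γ₁ ⋯ Γ_{m+k-1}`. -/
noncomputable def bigChirality (m k : ℕ)
    (γ : Fin m → Matrix (Fin (2 ^ (m / 2))) (Fin (2 ^ (m / 2))) ℂ)
    (γt : Fin k → Matrix (Fin (2 ^ (k / 2))) (Fin (2 ^ (k / 2))) ℂ) :
    Matrix (Fin (2 ^ (m / 2)) × Fin (2 ^ (k / 2))) (Fin (2 ^ (m / 2)) × Fin (2 ^ (k / 2))) ℂ :=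
  (Complex.I ^ ((m + k - 1) / 2)) • (List.ofFn (bigGamma m k γ γt)).prod

section Anticommuting

variable {R A : Type*} [CommRing R] [Ring A] [Algebra R A]

theorem List.prod_mul_of_forall_anticomm (x : A) :
    ∀ L : List A, (∀ y ∈ L, y * x = -(x * y)) →
      L.prod * x = ((-1 : R) ^ L.length) • (x * L.prod)
  | [], _ => by simp
  | a :: L, h => by
    have hL := prod_mul_of_forall_anticomm x L fun y hy => h y (List.mem_cons_of_mem _ hy)
    rw [List.prod_cons, mul_assoc, hL, mul_smul_comm, ← mul_assoc, h a List.mem_cons_self,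
      List.length_cons, pow_succ, mul_neg_one, neg_smul, neg_mul, smul_neg, mul_assoc]

/-- Moving each factor past the later ones costs one sign per pair, hence `(-1) ^ (n choose 2)`. -/
theorem List.prod_ofFn_mul_self_of_anticomm :
    ∀ {n : ℕ} (f : Fin n → A) (s : Fin n → R),
      (∀ i j, i ≠ j → f j * f i = -(f i * f j)) → (∀ i, f i * f i = s i • 1) →
      (List.ofFn f).prod * (List.ofFn f).prod = ((-1) ^ n.choose 2 * ∏ i, s i) • 1
  | 0, _, _, _, _ => by simp
  | n + 1, f, s, hanti, hsq => by
    have ih := prod_ofFn_mul_self_of_anticomm (fun i => f i.succ) (fun i => s i.succ)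
      (fun i j hij => hanti i.succ j.succ (Fin.succ_injective _ |>.ne hij)) (fun i => hsq i.succ)
    have hpast := List.prod_mul_of_forall_anticomm (R := R) (f 0) (List.ofFn fun i => f i.succ)
      (by
        simp only [List.mem_ofFn, forall_exists_index, forall_apply_eq_imp_iff]
        exact fun i => hanti 0 i.succ (Fin.succ_ne_zero i).symm)
    rw [List.length_ofFn] at hpast
    rw [List.ofFn_succ, List.prod_cons, mul_assoc, ← mul_assoc _ (f 0), hpast, smul_mul_assoc,
      mul_smul_comm, ← mul_assoc, ← mul_assoc, hsq 0, smul_mul_assoc, one_mul, smul_mul_assoc,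
      ih, smul_smul, smul_smul, Fin.prod_univ_succ, Nat.choose_succ_succ, Nat.choose_one_right,
      pow_add]
    ring_nf

end Anticommuting

section Kronecker

variable {α l n : Type*} [CommSemiring α] [Fintype l] [DecidableEq l] [Fintype n] [DecidableEq n]

theorem Matrix.list_prod_map_kronecker_one :
    ∀ L : List (Matrix l l α),
      (L.map fun A => A ⊗ₖ (1 : Matrix n n α)).prod = L.prod ⊗ₖ (1 : Matrix n n α)
  | [] => by simp
  | A :: L => by
    rw [List.map_cons, List.prod_cons, List.prod_cons, list_prod_map_kronecker_one L,
      ← mul_kronecker_mul, mul_one]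

theorem Matrix.list_prod_map_kronecker_left (A : Matrix l l α) :
    ∀ L : List (Matrix n n α), (L.map fun B => A ⊗ₖ B).prod = (A ^ L.length) ⊗ₖ L.prod
  | [] => by simp
  | B :: L => by
    rw [List.map_cons, List.prod_cons, List.prod_cons, list_prod_map_kronecker_left A L,
      ← mul_kronecker_mul, List.length_cons, pow_succ']

end Kronecker

-- The exponent of `-1` in `Γ_M ^ 2` for `m = n + 1`: phase, reordering, spatial squares.
theorem even_half_add_succ_choose_two_add (n : ℕ) : Even (n / 2 + (n + 1).choose 2 + n) := by
  rw [Nat.choose_two_right, Nat.add_sub_cancel]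
  obtain ⟨b, rfl | rfl⟩ := Nat.even_or_odd' n
  · rw [show (2 * b + 1) * (2 * b) = 2 * (b * (2 * b + 1)) by ring,
      Nat.mul_div_cancel_left _ two_pos, Nat.mul_div_cancel_left _ two_pos]
    exact ⟨b * b + 2 * b, by ring⟩
  · rw [show (2 * b + 1 + 1) * (2 * b + 1) = 2 * ((b + 1) * (2 * b + 1)) by ring,
      Nat.mul_div_cancel_left _ two_pos, show (2 * b + 1) / 2 = b by omega]
    exact ⟨b * b + 3 * b + 1, by ring⟩

theorem minkowski_gamma_mul_self {m : ℕ} {d : Type*} [Fintype d] [DecidableEq d]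
    (γ : Fin m → Matrix d d ℂ)
    (hγ : ∀ μ ν : Fin m,
      γ μ * γ ν + γ ν * γ μ
        = (if μ = ν then (if (μ : ℕ) = 0 then (2 : ℂ) else -2) else 0) • (1 : Matrix _ _ ℂ))
    (μ : Fin m) : γ μ * γ μ = (if (μ : ℕ) = 0 then (1 : ℂ) else -1) • 1 := by
  have h := hγ μ μ
  rw [if_pos rfl, ← two_smul ℂ] at h
  calc γ μ * γ μ = (2⁻¹ : ℂ) • (2 : ℂ) • (γ μ * γ μ) := by rw [smul_smul]; norm_num
    _ = _ := by rw [h, smul_smul]; split_ifs <;> norm_num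

/-- The normalisation `i ^ ⌊(m - 1)/2⌋` makes `Γ_M` an involution in every dimension `m`. -/
theorem minkChirality_sq (m : ℕ)
    (γ : Fin m → Matrix (Fin (2 ^ (m / 2))) (Fin (2 ^ (m / 2))) ℂ)
    (hγ : ∀ μ ν : Fin m,
      γ μ * γ ν + γ ν * γ μ
        = (if μ = ν then (if (μ : ℕ) = 0 then (2 : ℂ) else -2) else 0) • (1 : Matrix _ _ ℂ)) :
    minkChirality m γ ^ 2 = 1 := by
  rcases m with _ | n
  · simp [minkChirality]
  have hanti : ∀ μ ν, μ ≠ ν → γ ν * γ μ = -(γ μ * γ ν) := fun μ ν hμν =>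
    eq_neg_of_add_eq_zero_right (by rw [hγ, if_neg hμν, zero_smul])
  have hprod := List.prod_ofFn_mul_self_of_anticomm γ _ hanti (minkowski_gamma_mul_self γ hγ)
  have hsigns : ∏ μ : Fin (n + 1), (if (μ : ℕ) = 0 then (1 : ℂ) else -1) = (-1) ^ n := by
    simp [Fin.prod_univ_succ]
  have hI : (Complex.I ^ (n / 2)) ^ 2 = (-1) ^ (n / 2) := by
    rw [← pow_mul, mul_comm, pow_mul, Complex.I_sq]
  rw [minkChirality, smul_pow, sq (List.ofFn γ).prod, hprod, hsigns, smul_smul,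
    Nat.add_sub_cancel, hI, ← pow_add, ← pow_add, ← add_assoc,
    (even_half_add_succ_choose_two_add n).neg_one_pow, one_smul]

section BigGamma

variable {m k : ℕ} (γ : Fin m → Matrix (Fin (2 ^ (m / 2))) (Fin (2 ^ (m / 2))) ℂ)
  (γt : Fin k → Matrix (Fin (2 ^ (k / 2))) (Fin (2 ^ (k / 2))) ℂ)

theorem ofFn_bigGamma :
    List.ofFn (bigGamma m k γ γt)
      = (List.ofFn γ).map (· ⊗ₖ (1 : Matrix (Fin (2 ^ (k / 2))) (Fin (2 ^ (k / 2))) ℂ))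
        ++ (List.ofFn γt).map (minkChirality m γ ⊗ₖ ·) := by
  rw [List.map_ofFn, List.map_ofFn, List.ofFn_add]
  congr 2 <;> ext1 i <;> simp [bigGamma]

theorem prod_ofFn_bigGamma :
    (List.ofFn (bigGamma m k γ γt)).prod
      = ((List.ofFn γ).prod * minkChirality m γ ^ k) ⊗ₖ (List.ofFn γt).prod := by
  rw [ofFn_bigGamma, List.prod_append, Matrix.list_prod_map_kronecker_one,
    Matrix.list_prod_map_kronecker_left, List.length_ofFn, ← mul_kronecker_mul, one_mul]

theorem bigChirality_eq_pow_succ_kronecker (hm : Even m) (hm0 : m ≠ 0) :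
    bigChirality m k γ γt = (minkChirality m γ ^ (k + 1)) ⊗ₖ intChirality k γt := by
  have hexp : (m + k - 1) / 2 = (m - 1) / 2 + (k + 1) / 2 := by
    obtain ⟨a, rfl⟩ := hm
    omega
  rw [bigChirality, prod_ofFn_bigGamma, pow_succ', intChirality, kronecker_smul]
  nth_rw 2 [minkChirality]
  rw [smul_mul_assoc, smul_kronecker, smul_smul, hexp, pow_add, mul_comm]

end BigGamma

theorem bigChirality_factorization_general (m k : ℕ) (hm : Even m) (hm2 : 2 ≤ m)
    (γ : Fin m → Matrix (Fin (2 ^ (m / 2))) (Fin (2 ^ (m / 2))) ℂ)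
    (hγ : ∀ μ ν : Fin m,
      γ μ * γ ν + γ ν * γ μ
        = (if μ = ν then (if (μ : ℕ) = 0 then (2 : ℂ) else -2) else 0) • (1 : Matrix _ _ ℂ))
    (γt : Fin k → Matrix (Fin (2 ^ (k / 2))) (Fin (2 ^ (k / 2))) ℂ) :
    bigChirality m k γ γt = ((minkChirality m γ) ^ (k + 1)) ⊗ₖ (intChirality k γt) ∧
    (Even k → bigChirality m k γ γt = (minkChirality m γ) ⊗ₖ (intChirality k γt)) ∧
    (Odd k → bigChirality m k γ γt
        = (1 : Matrix (Fin (2 ^ (m / 2))) (Fin (2 ^ (m / 2))) ℂ) ⊗ₖ (intChirality k γt)) := by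
  have hfac := bigChirality_eq_pow_succ_kronecker γ γt hm (by omega)
  have heven_pow : ∀ n, Even n → minkChirality m γ ^ n = 1 := by
    rintro n ⟨t, rfl⟩
    rw [← two_mul, pow_mul, minkChirality_sq m γ hγ, one_pow]
  refine ⟨hfac, fun hk => ?_, fun hk => ?_⟩
  · rw [hfac, pow_succ, heven_pow k hk, one_mul]
  · rw [hfac, heven_pow _ hk.add_one]

/-- the higher-dimensional chirality operator factorizes as
`Γ_P = (Γ_M) ^ (k+1) ⊗ Γ_K`; in particular `Γ_P = Γ_M ⊗ Γ_K` when `k` is even and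
`Γ_P = I ⊗ Γ_K` when `k` is odd. -/
theorem bigChirality_factorization (m k : ℕ) (hm : Even m) (hm2 : 2 ≤ m) (hk : 1 ≤ k)
    (γ : Fin m → Matrix (Fin (2 ^ (m / 2))) (Fin (2 ^ (m / 2))) ℂ)
    (hγ : ∀ μ ν : Fin m,
      γ μ * γ ν + γ ν * γ μ
        = (if μ = ν then (if (μ : ℕ) = 0 then (2 : ℂ) else -2) else 0) • (1 : Matrix _ _ ℂ))
    (γt : Fin k → Matrix (Fin (2 ^ (k / 2))) (Fin (2 ^ (k / 2))) ℂ)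
    (hγt : ∀ j l : Fin k,
      γt j * γt l + γt l * γt j = (if j = l then (-2 : ℂ) else 0) • (1 : Matrix _ _ ℂ)) :
    bigChirality m k γ γt = ((minkChirality m γ) ^ (k + 1)) ⊗ₖ (intChirality k γt) ∧
    (Even k → bigChirality m k γ γt = (minkChirality m γ) ⊗ₖ (intChirality k γt)) ∧
    (Odd k → bigChirality m k γ γt
        = (1 : Matrix (Fin (2 ^ (m / 2))) (Fin (2 ^ (m / 2))) ℂ) ⊗ₖ (intChirality k γt)) :=
  bigChirality_factorization_general m k hm hm2 γ hγ γt
end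

section
/- With the Kronecker-product construction below, let σ ∈ {−1, +1} and set σ' := (−1)^{(m−2)/2} σ. Suppose j_1 : ℂ^{2^{m/2}} → ℂ^{2^{m/2}} is a conjugate-linear map with j_1(γ_μ φ) = σ γ_μ j_1(φ) for all μ and φ, and j_2 : ℂ^{2^⌊k/2⌋} → ℂ^{2^⌊k/2⌋} is a conjugate-linear map with j_2(γ̃_j ψ) = σ' γ̃_j j_2(ψ) for all j and ψ. Let J be the conjugate-linear map on ℂ^{2^{m/2}} ⊗ ℂ^{2^⌊k/2⌋} determined by J(φ ⊗ ψ) = j_1(φ) ⊗ j_2(ψ). Then J(Γ_a Ξ) = σ Γ_a J(Ξ) for every index a = 0, …, m+k−1 and every Ξ ∈ ℂ^{2^{m/2}} ⊗ ℂ^{2^⌊k/2⌋}. -/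
/-!
Both sides of `J (Γ_a Ξ) = σ Γ_a (J Ξ)` are conjugate-linear in `Ξ`, so it suffices to check the
identity on product vectors `φ ⊗ ψ`, where it factors into the relations for `j₁` and `j₂`.
For `a < m` the second factor is the identity. For `a ≥ m` the first factor is
`Γ_M = i ^ q γ₀ ⋯ γ_{m-1}`: `j₁` passes through the `m` gamma matrices at the cost of `σ ^ m = 1`
and conjugates the phase `i ^ q` into `(-1) ^ q i ^ q`; as `m` is even, `q = (m - 2) / 2`, so the sign
`(-1) ^ q σ'` is `σ`.
-/

open Matrix Kronecker

/-- The tensor product `φ ⊗ ψ` of two vectors, realized as a vector indexed by pairs. -/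
def tensorVec {M K : ℕ} (φ : Fin M → ℂ) (ψ : Fin K → ℂ) : Fin M × Fin K → ℂ :=
  fun p => φ p.1 * ψ p.2

def Intertwines {R n : Type*} [CommSemiring R] [Fintype n] (j : (n → R) → (n → R)) (s : R)
    (A : Matrix n n R) : Prop :=
  ∀ φ, j (A *ᵥ φ) = s • (A *ᵥ j φ)

namespace Intertwines

variable {R n : Type*} [CommSemiring R] [Fintype n] {j : (n → R) → (n → R)}

theorem one [DecidableEq n] : Intertwines j 1 (1 : Matrix n n R) := by
  intro φ
  simp only [one_mulVec, one_smul]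

theorem mul {s t : R} {A B : Matrix n n R} (hA : Intertwines j s A) (hB : Intertwines j t B) :
    Intertwines j (s * t) (A * B) := by
  intro φ
  rw [← mulVec_mulVec, hA, hB, ← mulVec_mulVec, mulVec_smul, smul_smul]

theorem list_prod [DecidableEq n] {s : R} {l : List (Matrix n n R)}
    (hl : ∀ A ∈ l, Intertwines j s A) :
    Intertwines j (s ^ l.length) l.prod := by
  induction l with
  | nil => simpa only [List.length_nil, pow_zero, List.prod_nil] using one
  | cons A l ih =>
    rw [List.length_cons, pow_succ', List.prod_cons]
    exact (hl A List.mem_cons_self).mul (ih fun B hB => hl B (List.mem_cons_of_mem A hB))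

theorem smul [StarRing R] {s c t : R} {A : Matrix n n R} (hA : Intertwines j s A)
    (hj : ∀ (a : R) φ, j (a • φ) = starRingEnd R a • j φ) (hc : starRingEnd R c = t * c) :
    Intertwines j (t * s) (c • A) := by
  intro φ
  rw [smul_mulVec, hj, hA, hc, smul_mulVec, smul_smul, smul_smul, mul_right_comm]

end Intertwines

section TensorVec

variable {M K : ℕ}

theorem tensorVec_smul_smul (a b : ℂ) (φ : Fin M → ℂ) (ψ : Fin K → ℂ) :
    tensorVec (a • φ) (b • ψ) = (a * b) • tensorVec φ ψ := by
  funext p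
  simp only [tensorVec, Pi.smul_apply, smul_eq_mul]
  ring

theorem tensorVec_single_single (i : Fin M) (l : Fin K) :
    tensorVec (Pi.single i 1) (Pi.single l 1) = Pi.single (i, l) (1 : ℂ) := by
  funext ⟨i', l'⟩
  by_cases hi : i' = i <;> by_cases hl : l' = l <;> simp [tensorVec, hi, hl]

theorem kronecker_mulVec_tensorVec (A : Matrix (Fin M) (Fin M) ℂ) (B : Matrix (Fin K) (Fin K) ℂ)
    (φ : Fin M → ℂ) (ψ : Fin K → ℂ) :
    (A ⊗ₖ B) *ᵥ tensorVec φ ψ = tensorVec (A *ᵥ φ) (B *ᵥ ψ) := by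
  funext p
  simp only [mulVec, dotProduct, tensorVec, kroneckerMap_apply, Fintype.sum_prod_type,
    Finset.sum_mul, Finset.mul_sum]
  rw [Finset.sum_comm]
  exact Finset.sum_congr rfl fun i _ => Finset.sum_congr rfl fun l _ => by ring

theorem ext_tensorVec {S N : Type*} [Semiring S] [AddCommMonoid N] [Module S N] {τ : ℂ →+* S}
    {f g : (Fin M × Fin K → ℂ) →ₛₗ[τ] N}
    (h : ∀ φ ψ, f (tensorVec φ ψ) = g (tensorVec φ ψ)) : f = g :=
  (Pi.basisFun ℂ _).ext fun ⟨i, l⟩ => by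
    simpa only [Pi.basisFun_apply, tensorVec_single_single] using
      h (Pi.single i 1) (Pi.single l 1)

theorem Intertwines.kronecker {j₁ : (Fin M → ℂ) → (Fin M → ℂ)} {j₂ : (Fin K → ℂ) → (Fin K → ℂ)}
    (J : (Fin M × Fin K → ℂ) →ₗ⋆[ℂ] (Fin M × Fin K → ℂ))
    (hJ : ∀ φ ψ, J (tensorVec φ ψ) = tensorVec (j₁ φ) (j₂ ψ))
    {s t : ℂ} {A : Matrix (Fin M) (Fin M) ℂ} {B : Matrix (Fin K) (Fin K) ℂ}
    (hA : Intertwines j₁ s A) (hB : Intertwines j₂ t B) :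
    Intertwines J (s * t) (A ⊗ₖ B) := by
  have hext : J.comp (A ⊗ₖ B).mulVecLin = (s * t) • (A ⊗ₖ B).mulVecLin.comp J :=
    ext_tensorVec fun φ ψ => by
      simp only [LinearMap.comp_apply, LinearMap.smul_apply, mulVecLin_apply,
        kronecker_mulVec_tensorVec, hJ, hA _, hB _, tensorVec_smul_smul]
  exact fun Ξ => LinearMap.congr_fun hext Ξ

end TensorVec

theorem minkChirality_intertwines {m : ℕ}
    {γ : Fin m → Matrix (Fin (2 ^ (m / 2))) (Fin (2 ^ (m / 2))) ℂ}
    {j : (Fin (2 ^ (m / 2)) → ℂ) → (Fin (2 ^ (m / 2)) → ℂ)} {σ : ℂ}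
    (hsmul : ∀ (c : ℂ) φ, j (c • φ) = starRingEnd ℂ c • j φ)
    (hγ : ∀ μ, Intertwines j σ (γ μ)) :
    Intertwines j ((-1) ^ ((m - 1) / 2) * σ ^ m) (minkChirality m γ) := by
  have hprod : Intertwines j (σ ^ m) (List.ofFn γ).prod := by
    simpa only [List.length_ofFn] using Intertwines.list_prod (List.forall_mem_ofFn_iff.mpr hγ)
  refine hprod.smul hsmul ?_
  rw [map_pow, Complex.conj_I, neg_pow]

theorem tensor_conjugation_intertwines_general (m k : ℕ) (hm : Even m)
    (γ : Fin m → Matrix (Fin (2 ^ (m / 2))) (Fin (2 ^ (m / 2))) ℂ)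
    (γt : Fin k → Matrix (Fin (2 ^ (k / 2))) (Fin (2 ^ (k / 2))) ℂ)
    (σ σ' : ℂ) (hσ : σ = 1 ∨ σ = -1) (hσ' : σ' = (-1 : ℂ) ^ ((m - 2) / 2) * σ)
    (j₁ : (Fin (2 ^ (m / 2)) → ℂ) → (Fin (2 ^ (m / 2)) → ℂ))
    (h₁smul : ∀ (c : ℂ) φ, j₁ (c • φ) = (starRingEnd ℂ c) • j₁ φ)
    (h₁γ : ∀ (μ : Fin m) φ, j₁ (γ μ *ᵥ φ) = σ • (γ μ *ᵥ j₁ φ))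
    (j₂ : (Fin (2 ^ (k / 2)) → ℂ) → (Fin (2 ^ (k / 2)) → ℂ))
    (h₂γ : ∀ (l : Fin k) ψ, j₂ (γt l *ᵥ ψ) = σ' • (γt l *ᵥ j₂ ψ))
    (J : (Fin (2 ^ (m / 2)) × Fin (2 ^ (k / 2)) → ℂ) → (Fin (2 ^ (m / 2)) × Fin (2 ^ (k / 2)) → ℂ))
    (hJadd : ∀ Ξ₁ Ξ₂, J (Ξ₁ + Ξ₂) = J Ξ₁ + J Ξ₂)
    (hJsmul : ∀ (c : ℂ) Ξ, J (c • Ξ) = (starRingEnd ℂ c) • J Ξ)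
    (hJtensor : ∀ (φ : Fin (2 ^ (m / 2)) → ℂ) (ψ : Fin (2 ^ (k / 2)) → ℂ),
      J (tensorVec φ ψ) = tensorVec (j₁ φ) (j₂ ψ)) :
    ∀ (a : Fin (m + k)) (Ξ : Fin (2 ^ (m / 2)) × Fin (2 ^ (k / 2)) → ℂ),
      J (bigGamma m k γ γt a *ᵥ Ξ) = σ • (bigGamma m k γ γt a *ᵥ J Ξ) := by
  let J' : _ →ₗ⋆[ℂ] _ := { toFun := J, map_add' := hJadd, map_smul' := hJsmul }
  have hσm : σ ^ m = 1 := by rcases hσ with rfl | rfl <;> simp [hm.neg_one_pow]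
  have hhalf : (m - 1) / 2 = (m - 2) / 2 := by obtain ⟨t, rfl⟩ := hm; omega
  intro a
  show Intertwines J' σ (bigGamma m k γ γt a)
  unfold bigGamma
  split_ifs with ha
  · simpa only [mul_one] using Intertwines.kronecker J' hJtensor (h₁γ ⟨a, ha⟩) .one
  · have hchir := minkChirality_intertwines h₁smul h₁γ
    rw [hσm, hhalf, mul_one] at hchir
    have hsign : (-1 : ℂ) ^ ((m - 2) / 2) * σ' = σ := by
      rw [hσ', ← mul_assoc, ← pow_add, Even.neg_one_pow ⟨_, rfl⟩, one_mul]
    simpa only [hsign] using hchir.kronecker J' hJtensor (h₂γ _)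

/-- if `j₁` and `j₂` are conjugate-linear maps intertwining the lower-dimensional
gamma matrices with signs `σ` and `σ' = (-1) ^ ((m-2)/2) σ` respectively, then the
conjugate-linear map `J` determined by `J(φ ⊗ ψ) = j₁(φ) ⊗ j₂(ψ)` intertwines all the
higher-dimensional gamma matrices `Γ_a` with the sign `σ`. -/
theorem tensor_conjugation_intertwines (m k : ℕ) (hm : Even m) (hm2 : 2 ≤ m) (hk : 1 ≤ k)
    (γ : Fin m → Matrix (Fin (2 ^ (m / 2))) (Fin (2 ^ (m / 2))) ℂ)
    (hγ : ∀ μ ν : Fin m,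
      γ μ * γ ν + γ ν * γ μ
        = (if μ = ν then (if (μ : ℕ) = 0 then (2 : ℂ) else -2) else 0) • (1 : Matrix _ _ ℂ))
    (γt : Fin k → Matrix (Fin (2 ^ (k / 2))) (Fin (2 ^ (k / 2))) ℂ)
    (hγt : ∀ j l : Fin k,
      γt j * γt l + γt l * γt j = (if j = l then (-2 : ℂ) else 0) • (1 : Matrix _ _ ℂ))
    (σ σ' : ℂ) (hσ : σ = 1 ∨ σ = -1) (hσ' : σ' = (-1 : ℂ) ^ ((m - 2) / 2) * σ)
    (j₁ : (Fin (2 ^ (m / 2)) → ℂ) → (Fin (2 ^ (m / 2)) → ℂ))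
    (h₁add : ∀ φ₁ φ₂, j₁ (φ₁ + φ₂) = j₁ φ₁ + j₁ φ₂)
    (h₁smul : ∀ (c : ℂ) φ, j₁ (c • φ) = (starRingEnd ℂ c) • j₁ φ)
    (h₁γ : ∀ (μ : Fin m) φ, j₁ (γ μ *ᵥ φ) = σ • (γ μ *ᵥ j₁ φ))
    (j₂ : (Fin (2 ^ (k / 2)) → ℂ) → (Fin (2 ^ (k / 2)) → ℂ))
    (h₂add : ∀ ψ₁ ψ₂, j₂ (ψ₁ + ψ₂) = j₂ ψ₁ + j₂ ψ₂)
    (h₂smul : ∀ (c : ℂ) ψ, j₂ (c • ψ) = (starRingEnd ℂ c) • j₂ ψ)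
    (h₂γ : ∀ (l : Fin k) ψ, j₂ (γt l *ᵥ ψ) = σ' • (γt l *ᵥ j₂ ψ))
    (J : (Fin (2 ^ (m / 2)) × Fin (2 ^ (k / 2)) → ℂ) → (Fin (2 ^ (m / 2)) × Fin (2 ^ (k / 2)) → ℂ))
    (hJadd : ∀ Ξ₁ Ξ₂, J (Ξ₁ + Ξ₂) = J Ξ₁ + J Ξ₂)
    (hJsmul : ∀ (c : ℂ) Ξ, J (c • Ξ) = (starRingEnd ℂ c) • J Ξ)
    (hJtensor : ∀ (φ : Fin (2 ^ (m / 2)) → ℂ) (ψ : Fin (2 ^ (k / 2)) → ℂ),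
      J (tensorVec φ ψ) = tensorVec (j₁ φ) (j₂ ψ)) :
    ∀ (a : Fin (m + k)) (Ξ : Fin (2 ^ (m / 2)) × Fin (2 ^ (k / 2)) → ℂ),
      J (bigGamma m k γ γt a *ᵥ Ξ) = σ • (bigGamma m k γ γt a *ᵥ J Ξ) :=
  tensor_conjugation_intertwines_general m k hm γ γt σ σ' hσ hσ' j₁ h₁smul h₁γ j₂ h₂γ J hJadd hJsmul
    hJtensor
end
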